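/- arXiv:math/0703553 — 6 statements merged into one kernel-verified Lean document; each statement's English description precedes it below -/
import Mathlib

section
/- Let m be a nonzero cube-free integer, let E be the elliptic curve y^2 = x^3 - 432m^2 over ℚ, let p be a prime with p > 3, and let Q ∈ E(ℚ) be a point of infinite order with ord_p(x(Q)) > 0. Then for every integer k ≥ 1 coprime to 3, ord_p(x(kQ)) = ord_p(x(Q)) + ord_p(k). -/
open WeierstrassCurve

/-- The Mordell curve `y² = x³ - 432·m²` as an affine Weierstrass curve over `ℚ`. -/
noncomputable def Mordell (m : ℤ) : WeierstrassCurve.Affine ℚ :=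
  { a₁ := 0, a₂ := 0, a₃ := 0, a₄ := 0, a₆ := -432 * (m : ℚ) ^ 2 }

/-- An integer is cube-free if the only cubes dividing it are units. -/
def CubeFree (m : ℤ) : Prop := ∀ d : ℤ, d ^ 3 ∣ m → IsUnit d

/-- `d` is a primitive divisor of the `n`-th term of the sequence `S`: `d > 1`, `d ∣ S n`,
and `d` is coprime to every earlier nonzero term. -/
def IsPrimitiveDivisor (S : ℕ → ℤ) (n : ℕ) (d : ℤ) : Prop :=
  1 < d ∧ d ∣ S n ∧ ∀ k : ℕ, 1 ≤ k → k < n → S k ≠ 0 → Int.gcd d (S k) = 1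

/-- The x-coordinate of an affine point (junk value `0` at the point at infinity). -/
noncomputable def xCoord {m : ℤ} : (Mordell m).Point → ℚ
  | .zero => 0
  | @WeierstrassCurve.Affine.Point.some _ _ _ x _ _ => x

/-!
A point `Q = (x₁, y₁)` with `v_p(x₁) = α > 0` is `p`-adically close to one of the 3-torsion
points `(0, ±√a₆)`, and since `m` is cube-free, `v_p(y₁) = v_p(m) =: t` with `2t < 3α`.
Writing `k = j + j'` with `j ≡ j' ≢ 0 (mod 3)`, the addition law shows by induction that `kQ` lies
near `σ_k` times that torsion point (`σ_k = ±1` according to `k mod 3`) and that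
`σ_k x(kQ) ≡ k x₁ + D (σ_k k⁴ - k)` modulo `p^(7α - 4t)`, where `D = x₁⁴ / 8y₁²`.
This pins down `v_p(x(kQ)) = α + v_p(k)` as long as `v_p(k) < 6α - 4t`; multiplying by `p` one
factor at a time raises `α` by one each step, so this bound is never in the way.
-/

/-- `p ^ u ∣ q` in `ℤ_(p)`, phrased through the norm so that `q = 0` needs no case split. -/
def PadicDvd (p : ℕ) (u : ℤ) (q : ℚ) : Prop := padicNorm p q ≤ (p : ℚ) ^ (-u)

section PadicNorm

variable {p : ℕ} {u v : ℤ} {a b : ℚ}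

theorem padicNorm_natCast_eq {k : ℕ} (hk : k ≠ 0) :
    padicNorm p k = (p : ℚ) ^ (-(padicValNat p k : ℤ)) := by
  rw [padicNorm.eq_zpow_of_nonzero (Nat.cast_ne_zero.2 hk), padicValRat.of_nat]

theorem PadicDvd.of_padicNorm_eq (h : padicNorm p a = (p : ℚ) ^ (-u)) : PadicDvd p u a := h.le

theorem PadicDvd.neg (ha : PadicDvd p u a) : PadicDvd p u (-a) := by
  rwa [PadicDvd, padicNorm.neg]

variable [hp : Fact p.Prime]

private lemma cast_prime_pos : (0 : ℚ) < p := Nat.cast_pos.2 hp.out.pos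

private lemma one_lt_cast_prime : (1 : ℚ) < p := Nat.one_lt_cast.2 hp.out.one_lt

theorem padicNorm_eq_one_of_sq_eq_one (h : a ^ 2 = 1) : padicNorm p a = 1 := by
  have h2 : padicNorm p a ^ 2 = 1 ^ 2 := by
    rw [← IsAbsoluteValue.abv_pow (padicNorm p), h, padicNorm.one, one_pow]
  exact (pow_left_inj₀ (padicNorm.nonneg a) zero_le_one two_ne_zero).1 h2

theorem padicNorm_two_pow (hp2 : p ≠ 2) (n : ℕ) : padicNorm p (2 ^ n) = 1 := by
  have h2 : padicNorm p ((2 : ℕ) : ℚ) = 1 :=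
    (padicNorm.nat_eq_one_iff 2).2 fun h =>
      hp2 ((Nat.prime_dvd_prime_iff_eq hp.out Nat.prime_two).1 h)
  rw [IsAbsoluteValue.abv_pow (padicNorm p), ← Nat.cast_ofNat, h2, one_pow]

theorem padicNorm_sq_eq_zpow_iff :
    padicNorm p (a ^ 2) = (p : ℚ) ^ (-(2 * u)) ↔ padicNorm p a = (p : ℚ) ^ (-u) := by
  rw [IsAbsoluteValue.abv_pow (padicNorm p), show -(2 * u) = -u * (2 : ℕ) by ring, zpow_mul,
    zpow_natCast]
  exact pow_left_inj₀ (padicNorm.nonneg a) (zpow_pos cast_prime_pos _).le two_ne_zero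

theorem padicNorm_sq_ne_zpow_of_odd (n : ℤ) : padicNorm p (a ^ 2) ≠ (p : ℚ) ^ (-(2 * n + 1)) := by
  intro h
  rcases eq_or_ne a 0 with rfl | ha
  · simp only [ne_eq, OfNat.ofNat_ne_zero, not_false_eq_true, zero_pow, padicNorm.zero] at h
    exact (zpow_pos cast_prime_pos _).ne h
  rw [padicNorm.eq_zpow_of_nonzero (pow_ne_zero 2 ha), padicValRat.pow a] at h
  have := zpow_right_injective₀ cast_prime_pos one_lt_cast_prime.ne' h
  omega

theorem ne_zero_of_padicNorm_eq_zpow (h : padicNorm p a = (p : ℚ) ^ (-u)) : a ≠ 0 := by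
  rintro rfl
  exact (zpow_pos cast_prime_pos _).ne' (h.symm.trans padicNorm.zero)

theorem padicValRat_eq_of_padicNorm_eq (h : padicNorm p a = (p : ℚ) ^ (-u)) :
    padicValRat p a = u := by
  rw [padicNorm.eq_zpow_of_nonzero (ne_zero_of_padicNorm_eq_zpow h)] at h
  exact neg_injective (zpow_right_injective₀ cast_prime_pos one_lt_cast_prime.ne' h)

theorem padicNorm_eq_of_padicDvd_sub (ha : padicNorm p a = (p : ℚ) ^ (-u))
    (hba : PadicDvd p v (b - a)) (huv : u < v) : padicNorm p b = (p : ℚ) ^ (-u) := by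
  have hlt : padicNorm p (b - a) < padicNorm p a :=
    ha ▸ hba.trans_lt (zpow_lt_zpow_right₀ one_lt_cast_prime (neg_lt_neg huv))
  rw [← sub_add_cancel b a, padicNorm.add_eq_max_of_ne hlt.ne, max_eq_right hlt.le, ha]

theorem padicDvd_zero_of_sq_eq_one (h : a ^ 2 = 1) : PadicDvd p 0 a :=
  PadicDvd.of_padicNorm_eq (by rw [padicNorm_eq_one_of_sq_eq_one h, neg_zero, zpow_zero])

namespace PadicDvd

theorem zero : PadicDvd p u 0 := by
  rw [PadicDvd, padicNorm.zero]
  exact (zpow_pos cast_prime_pos _).le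

theorem natCast (n : ℕ) : PadicDvd p 0 n := by
  simpa [PadicDvd] using padicNorm.of_nat n

theorem two : PadicDvd p 0 2 := by
  exact_mod_cast natCast (p := p) 2

theorem mono (h : PadicDvd p u a) (hvu : v ≤ u) : PadicDvd p v a :=
  h.trans (zpow_le_zpow_right₀ one_lt_cast_prime.le (neg_le_neg hvu))

theorem mul (ha : PadicDvd p u a) (hb : PadicDvd p v b) : PadicDvd p (u + v) (a * b) := by
  rw [PadicDvd, padicNorm.mul, neg_add, zpow_add₀ cast_prime_pos.ne']
  exact mul_le_mul ha hb (padicNorm.nonneg b) (zpow_pos cast_prime_pos _).le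

theorem add (ha : PadicDvd p u a) (hb : PadicDvd p u b) : PadicDvd p u (a + b) :=
  padicNorm.nonarchimedean.trans (max_le ha hb)

theorem sub (ha : PadicDvd p u a) (hb : PadicDvd p u b) : PadicDvd p u (a - b) :=
  padicNorm.sub.trans (max_le ha hb)

theorem pow (ha : PadicDvd p u a) (n : ℕ) : PadicDvd p (n * u) (a ^ n) := by
  induction n with
  | zero => simpa using natCast (p := p) 1
  | succ n ih => simpa [pow_succ, add_mul] using ih.mul ha

theorem div (ha : PadicDvd p u a) (hb : padicNorm p b = (p : ℚ) ^ (-v)) :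
    PadicDvd p (u - v) (a / b) := by
  rw [PadicDvd, padicNorm.div, hb, div_le_iff₀ (zpow_pos cast_prime_pos _),
    ← zpow_add₀ cast_prime_pos.ne']
  exact ha.trans_eq (by ring_nf)

end PadicDvd

end PadicNorm

namespace WeierstrassCurve.Affine

variable {W : WeierstrassCurve.Affine ℚ} [W.IsShortNF] {a a' b b' : ℚ}

theorem equation_iff_of_isShortNF {x y : ℚ} :
    W.Equation x y ↔ y ^ 2 = x ^ 3 + W.a₄ * x + W.a₆ := by
  rw [equation_iff, a₁_of_isShortNF, a₂_of_isShortNF, a₃_of_isShortNF]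
  ring_nf

/-- On `y² = x³ + c` the chord slope `(b - b') / (a - a')` and the tangent slope `3a² / 2b`
agree with this expression, which needs no case split. -/
def jZeroSlope (a a' b b' : ℚ) : ℚ := (a ^ 2 + a * a' + a' ^ 2) / (b + b')

theorem slope_eq_jZeroSlope (ha₄ : W.a₄ = 0) (h : W.Equation a b) (h' : W.Equation a' b')
    (hb : b + b' ≠ 0) : W.slope a a' b b' = jZeroSlope a a' b b' := by
  rw [equation_iff_of_isShortNF, ha₄] at h h'
  have hneg : b ≠ W.negY a' b' := by
    rw [negY, a₁_of_isShortNF, a₃_of_isShortNF]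
    contrapose! hb
    linear_combination hb
  rw [jZeroSlope]
  by_cases ha : a = a'
  · subst ha
    obtain rfl : b = b' := by
      have : (b - b') * (b + b') = 0 := by linear_combination h - h'
      exact sub_eq_zero.1 ((mul_eq_zero.1 this).resolve_right hb)
    rw [slope_of_Y_ne rfl hneg, negY, a₁_of_isShortNF, a₂_of_isShortNF, a₃_of_isShortNF, ha₄,
      div_eq_div_iff (by contrapose! hb; linear_combination hb) hb]
    ring
  · rw [slope_of_X_ne ha, div_eq_div_iff (sub_ne_zero.2 ha) hb]
    linear_combination h - h'

theorem exists_some_add_some_eq (ha₄ : W.a₄ = 0) (h : W.Nonsingular a b)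
    (h' : W.Nonsingular a' b') (hb : b + b' ≠ 0) :
    ∃ h'' : W.Nonsingular (jZeroSlope a a' b b' ^ 2 - a - a')
        (-(jZeroSlope a a' b b' * (jZeroSlope a a' b b' ^ 2 - a - a' - a) + b)),
      Point.some _ _ h + Point.some _ _ h' = Point.some _ _ h'' := by
  have hxy : ¬(a = a' ∧ b = W.negY a' b') := by
    rintro ⟨rfl, hneg⟩
    rw [negY, a₁_of_isShortNF, a₃_of_isShortNF] at hneg
    exact hb (by linear_combination hneg)
  have hslope := slope_eq_jZeroSlope ha₄ h.1 h'.1 hb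
  have hX : W.addX a a' (W.slope a a' b b') = jZeroSlope a a' b b' ^ 2 - a - a' := by
    rw [addX, hslope, a₁_of_isShortNF, a₂_of_isShortNF]
    ring
  have hY : W.addY a a' b (W.slope a a' b b') =
      -(jZeroSlope a a' b b' * (jZeroSlope a a' b b' ^ 2 - a - a' - a) + b) := by
    rw [addY, negAddY, negY, hX, hslope, a₁_of_isShortNF, a₃_of_isShortNF]
    ring
  rw [← hY, ← hX]
  exact ⟨nonsingular_add h h' hxy, Point.add_some hxy⟩

end WeierstrassCurve.Affine

/-- `(x, y)` is `p`-adically close to one of the 3-torsion points `(0, ±√c)` of `y² = x³ + c`. -/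
structure NearThreeTorsion (p : ℕ) (α t : ℤ) (x y : ℚ) : Prop where
  one_le : 1 ≤ α
  two_mul_lt : 2 * t < 3 * α
  norm_x : padicNorm p x = (p : ℚ) ^ (-α)
  norm_y : padicNorm p y = (p : ℚ) ^ (-t)

def quarticCoeff (x₁ y₁ : ℚ) : ℚ := x₁ ^ 4 / (8 * y₁ ^ 2)

/-- `(x, y)` approximates `k • (x₁, y₁)`, a point near `σ` times the 3-torsion point:
`σ x ≈ k x₁ + D (σ k⁴ - k)` with `D = quarticCoeff x₁ y₁`, and `y ≈ σ y₁`. -/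
structure MultipleApprox (p : ℕ) (α t : ℤ) (x₁ y₁ σ : ℚ) (k : ℕ) (x y : ℚ) : Prop where
  dvd_x : PadicDvd p α x
  dvd_x_sub : PadicDvd p (7 * α - 4 * t) (σ * x - k * x₁ - quarticCoeff x₁ y₁ * (σ * k ^ 4 - k))
  dvd_y_sub : PadicDvd p (3 * α - t) (y - σ * y₁)

section Approximation

open WeierstrassCurve.Affine PadicDvd

variable {p : ℕ} [hp : Fact p.Prime] {α t : ℤ} {x₁ y₁ σ a a' b b' : ℚ} {j j' : ℕ}

namespace NearThreeTorsion

theorem padicNorm_two_pow_mul_sq (hp2 : p ≠ 2) (h : NearThreeTorsion p α t x₁ y₁) (n : ℕ) :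
    padicNorm p (2 ^ n * y₁ ^ 2) = (p : ℚ) ^ (-(2 * t)) := by
  rw [padicNorm.mul, padicNorm_two_pow hp2, one_mul, padicNorm_sq_eq_zpow_iff]
  exact h.norm_y

theorem padicDvd_quarticCoeff (hp2 : p ≠ 2) (h : NearThreeTorsion p α t x₁ y₁) :
    PadicDvd p (4 * α - 2 * t) (quarticCoeff x₁ y₁) := by
  have h8 : (8 : ℚ) = 2 ^ 3 := by norm_num
  rw [quarticCoeff, h8]
  exact ((of_padicNorm_eq h.norm_x).pow 4).div (h.padicNorm_two_pow_mul_sq hp2 3) |>.mono (by omega)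

end NearThreeTorsion

namespace MultipleApprox

theorem dvd_sub_mul (hp2 : p ≠ 2) (h₁ : NearThreeTorsion p α t x₁ y₁) (hσ : σ ^ 2 = 1)
    (h : MultipleApprox p α t x₁ y₁ σ j a b) : PadicDvd p (4 * α - 2 * t) (σ * a - j * x₁) := by
  have := h₁.two_mul_lt
  have hμ : PadicDvd p 0 (σ * j ^ 4 - j) :=
    ((padicDvd_zero_of_sq_eq_one hσ).mul ((natCast j).pow 4)).sub (natCast j) |>.mono (by omega)
  rw [show σ * a - j * x₁ = quarticCoeff x₁ y₁ * (σ * j ^ 4 - j) +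
    (σ * a - j * x₁ - quarticCoeff x₁ y₁ * (σ * j ^ 4 - j)) by ring]
  exact ((h₁.padicDvd_quarticCoeff hp2).mul hμ).add (h.dvd_x_sub.mono (by omega))
    |>.mono (by omega)

theorem dvd_jZeroSlope_num_sub (hp2 : p ≠ 2) (h₁ : NearThreeTorsion p α t x₁ y₁) (hσ : σ ^ 2 = 1)
    (h : MultipleApprox p α t x₁ y₁ σ j a b) (h' : MultipleApprox p α t x₁ y₁ σ j' a' b') :
    PadicDvd p (5 * α - 2 * t)
      (a ^ 2 + a * a' + a' ^ 2 - ((j ^ 2 + j * j' + j' ^ 2 : ℕ) : ℚ) * x₁ ^ 2) := by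
  have := h₁.two_mul_lt
  have hd := h.dvd_sub_mul hp2 h₁ hσ
  have hd' := h'.dvd_sub_mul hp2 h₁ hσ
  have hσ₀ := padicDvd_zero_of_sq_eq_one (p := p) hσ
  have hx₁ : PadicDvd p α x₁ := of_padicNorm_eq h₁.norm_x
  have hσa : PadicDvd p α (σ * a) := (hσ₀.mul h.dvd_x).mono (by omega)
  have hσa' : PadicDvd p α (σ * a') := (hσ₀.mul h'.dvd_x).mono (by omega)
  have hjx : PadicDvd p α (j * x₁) := ((natCast j).mul hx₁).mono (by omega)
  have hjx' : PadicDvd p α (j' * x₁) := ((natCast j').mul hx₁).mono (by omega)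
  rw [show a ^ 2 + a * a' + a' ^ 2 - ((j ^ 2 + j * j' + j' ^ 2 : ℕ) : ℚ) * x₁ ^ 2 =
      (σ * a - j * x₁) * (σ * a + j * x₁) + (σ * a - j * x₁) * (σ * a')
        + j * x₁ * (σ * a' - j' * x₁) + (σ * a' - j' * x₁) * (σ * a' + j' * x₁) by
    push_cast; linear_combination -(a ^ 2 + a * a' + a' ^ 2) * hσ]
  exact (((hd.mul (hσa.add hjx)).mono (by omega)).add ((hd.mul hσa').mono (by omega))).add
    ((hjx.mul hd').mono (by omega)) |>.add ((hd'.mul (hσa'.add hjx')).mono (by omega))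

theorem padicNorm_add_y (hp2 : p ≠ 2) (h₁ : NearThreeTorsion p α t x₁ y₁) (hσ : σ ^ 2 = 1)
    (h : MultipleApprox p α t x₁ y₁ σ j a b) (h' : MultipleApprox p α t x₁ y₁ σ j' a' b') :
    padicNorm p (b + b') = (p : ℚ) ^ (-t) := by
  have := h₁.two_mul_lt
  refine padicNorm_eq_of_padicDvd_sub (a := 2 ^ 1 * (σ * y₁)) ?_ ?_ (by omega : t < 3 * α - t)
  · rw [padicNorm.mul, padicNorm_two_pow hp2, padicNorm.mul, padicNorm_eq_one_of_sq_eq_one hσ,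
      h₁.norm_y, one_mul, one_mul]
  · rw [show b + b' - 2 ^ 1 * (σ * y₁) = (b - σ * y₁) + (b' - σ * y₁) by ring]
    exact h.dvd_y_sub.add h'.dvd_y_sub

theorem dvd_jZeroSlope (hp2 : p ≠ 2) (h₁ : NearThreeTorsion p α t x₁ y₁) (hσ : σ ^ 2 = 1)
    (h : MultipleApprox p α t x₁ y₁ σ j a b) (h' : MultipleApprox p α t x₁ y₁ σ j' a' b') :
    PadicDvd p (2 * α - t) (jZeroSlope a a' b b') := by
  have := h₁.two_mul_lt
  have hN : PadicDvd p (2 * α) (a ^ 2 + a * a' + a' ^ 2) := by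
    rw [← sub_add_cancel (a ^ 2 + a * a' + a' ^ 2) (((j ^ 2 + j * j' + j' ^ 2 : ℕ) : ℚ) * x₁ ^ 2)]
    exact ((h.dvd_jZeroSlope_num_sub hp2 h₁ hσ h').mono (by omega)).add
      (((natCast _).mul ((of_padicNorm_eq h₁.norm_x).pow 2)).mono (by omega))
  exact hN.div (h.padicNorm_add_y hp2 h₁ hσ h') |>.mono (by omega)

theorem dvd_jZeroSlope_sq_sub (hp2 : p ≠ 2) (h₁ : NearThreeTorsion p α t x₁ y₁)
    (hσ : σ ^ 2 = 1) (h : MultipleApprox p α t x₁ y₁ σ j a b)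
    (h' : MultipleApprox p α t x₁ y₁ σ j' a' b') :
    PadicDvd p (7 * α - 4 * t) (jZeroSlope a a' b b' ^ 2 -
      2 * quarticCoeff x₁ y₁ * ((j ^ 2 + j * j' + j' ^ 2 : ℕ) : ℚ) ^ 2) := by
  have := h₁.two_mul_lt
  set S : ℚ := ((j ^ 2 + j * j' + j' ^ 2 : ℕ) : ℚ)
  set ρ := a ^ 2 + a * a' + a' ^ 2 - S * x₁ ^ 2
  set ε := b + b' - 2 * σ * y₁
  have hρ : PadicDvd p (5 * α - 2 * t) ρ := h.dvd_jZeroSlope_num_sub hp2 h₁ hσ h'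
  have hε : PadicDvd p (3 * α - t) ε := by
    rw [show ε = (b - σ * y₁) + (b' - σ * y₁) by ring]
    exact h.dvd_y_sub.add h'.dvd_y_sub
  have hY := h.padicNorm_add_y hp2 h₁ hσ h'
  have hY0 : b + b' ≠ 0 := ne_zero_of_padicNorm_eq_zpow hY
  have hy₁ : y₁ ≠ 0 := ne_zero_of_padicNorm_eq_zpow h₁.norm_y
  have hS : PadicDvd p 0 S := natCast _
  have hx₁ : PadicDvd p α x₁ := of_padicNorm_eq h₁.norm_x
  -- the numerator of `λ² - 2 D S²`, expanded around `a² + a a' + a'² = S x₁²`, `b + b' = 2 σ y₁`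
  have hnum : PadicDvd p (7 * α - 2 * t) (2 * S * x₁ ^ 2 * ρ + ρ ^ 2
      - σ * S ^ 2 * x₁ ^ 4 * ε / y₁ - S ^ 2 * x₁ ^ 4 * ε ^ 2 / (2 ^ 2 * y₁ ^ 2)) := by
    have hσ₀ := padicDvd_zero_of_sq_eq_one (p := p) hσ
    refine (((((two.mul hS).mul (hx₁.pow 2)).mul hρ).mono (by omega)).add
      ((hρ.pow 2).mono (by omega))).sub ?_ |>.sub ?_
    · exact (((hσ₀.mul (hS.pow 2)).mul (hx₁.pow 4)).mul hε).div h₁.norm_y |>.mono (by omega)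
    · exact (((hS.pow 2).mul (hx₁.pow 4)).mul (hε.pow 2)).div (h₁.padicNorm_two_pow_mul_sq hp2 2)
        |>.mono (by omega)
  rw [show jZeroSlope a a' b b' ^ 2 - 2 * quarticCoeff x₁ y₁ * S ^ 2 =
      (2 * S * x₁ ^ 2 * ρ + ρ ^ 2 - σ * S ^ 2 * x₁ ^ 4 * ε / y₁
        - S ^ 2 * x₁ ^ 4 * ε ^ 2 / (2 ^ 2 * y₁ ^ 2)) / (b + b') ^ 2 by
    rw [jZeroSlope, quarticCoeff]
    rcases sq_eq_one_iff.1 hσ with rfl | rfl <;> field_simp <;> ring]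
  exact hnum.div (padicNorm_sq_eq_zpow_iff.2 hY) |>.mono (by omega)

theorem add (hp2 : p ≠ 2) (h₁ : NearThreeTorsion p α t x₁ y₁) (hσ : σ ^ 2 = 1)
    (h : MultipleApprox p α t x₁ y₁ σ j a b) (h' : MultipleApprox p α t x₁ y₁ σ j' a' b') :
    MultipleApprox p α t x₁ y₁ (-σ) (j + j') (jZeroSlope a a' b b' ^ 2 - a - a')
      (-(jZeroSlope a a' b b' * (jZeroSlope a a' b b' ^ 2 - a - a' - a) + b)) := by
  have := h₁.two_mul_lt
  have hsl := h.dvd_jZeroSlope hp2 h₁ hσ h'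
  have hx : PadicDvd p α (jZeroSlope a a' b b' ^ 2 - a - a') :=
    (((hsl.pow 2).mono (by omega)).sub h.dvd_x).sub h'.dvd_x
  refine ⟨hx, ?_, ?_⟩
  · rw [show -σ * (jZeroSlope a a' b b' ^ 2 - a - a') - ((j + j' : ℕ) : ℚ) * x₁
        - quarticCoeff x₁ y₁ * (-σ * ((j + j' : ℕ) : ℚ) ^ 4 - ((j + j' : ℕ) : ℚ)) =
        -σ * (jZeroSlope a a' b b' ^ 2 - 2 * quarticCoeff x₁ y₁ *
          ((j ^ 2 + j * j' + j' ^ 2 : ℕ) : ℚ) ^ 2)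
        + (σ * a - j * x₁ - quarticCoeff x₁ y₁ * (σ * j ^ 4 - j))
        + (σ * a' - j' * x₁ - quarticCoeff x₁ y₁ * (σ * j' ^ 4 - j')) by push_cast; ring]
    exact (((padicDvd_zero_of_sq_eq_one hσ).neg.mul (h.dvd_jZeroSlope_sq_sub hp2 h₁ hσ h')).mono
      (by omega)).add h.dvd_x_sub |>.add h'.dvd_x_sub
  · rw [show -(jZeroSlope a a' b b' * (jZeroSlope a a' b b' ^ 2 - a - a' - a) + b) - -σ * y₁ =
        -(jZeroSlope a a' b b' * (jZeroSlope a a' b b' ^ 2 - a - a' - a)) - (b - σ * y₁) by ring]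
    exact ((hsl.mul (hx.sub h.dvd_x)).neg.mono (by omega)).sub h.dvd_y_sub

theorem padicNorm_x (hp2 : p ≠ 2) (h₁ : NearThreeTorsion p α t x₁ y₁) (hσ : σ ^ 2 = 1)
    {k : ℕ} {x y : ℚ} (h : MultipleApprox p α t x₁ y₁ σ k x y) (hk : k ≠ 0)
    (hv : padicValNat p k < 6 * α - 4 * t) :
    padicNorm p x = (p : ℚ) ^ (-(α + padicValNat p k)) := by
  have := h₁.two_mul_lt
  have hkn := padicNorm_natCast_eq (p := p) hk
  have hkx₁ : padicNorm p (k * x₁) = (p : ℚ) ^ (-(α + padicValNat p k)) := by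
    rw [padicNorm.mul, hkn, h₁.norm_x, ← zpow_add₀ (Nat.cast_ne_zero.2 hp.out.ne_zero)]
    ring_nf
  have hμ : PadicDvd p 0 (σ * k ^ 3 - 1) :=
    ((padicDvd_zero_of_sq_eq_one hσ).mul ((natCast k).pow 3)).sub (by simpa using natCast 1)
      |>.mono (by omega)
  rw [← one_mul (padicNorm p x), ← padicNorm_eq_one_of_sq_eq_one (p := p) hσ, ← padicNorm.mul]
  refine padicNorm_eq_of_padicDvd_sub hkx₁ (v := α + padicValNat p k + 1) ?_ (by omega)
  rw [show σ * x - k * x₁ = quarticCoeff x₁ y₁ * k * (σ * k ^ 3 - 1) +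
    (σ * x - k * x₁ - quarticCoeff x₁ y₁ * (σ * k ^ 4 - k)) by ring]
  exact ((((h₁.padicDvd_quarticCoeff hp2).mul (of_padicNorm_eq hkn)).mul hμ).mono (by omega)).add
    (h.dvd_x_sub.mono (by omega))

theorem padicNorm_y (h₁ : NearThreeTorsion p α t x₁ y₁) (hσ : σ ^ 2 = 1) {k : ℕ} {x y : ℚ}
    (h : MultipleApprox p α t x₁ y₁ σ k x y) : padicNorm p y = (p : ℚ) ^ (-t) := by
  have := h₁.two_mul_lt
  refine padicNorm_eq_of_padicDvd_sub ?_ h.dvd_y_sub (by omega)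
  rw [padicNorm.mul, padicNorm_eq_one_of_sq_eq_one hσ, one_mul, h₁.norm_y]

end MultipleApprox

end Approximation

def sign3 (k : ℕ) : ℚ := if k % 3 = 1 then 1 else -1

theorem sign3_sq (k : ℕ) : sign3 k ^ 2 = 1 := by
  unfold sign3; split_ifs <;> norm_num

theorem sign3_add {j j' : ℕ} (hj : j % 3 ≠ 0) (hjj' : j % 3 = j' % 3) :
    sign3 (j + j') = -sign3 j := by
  have : (j + j') % 3 = (j % 3 + j' % 3) % 3 := Nat.add_mod _ _ _
  unfold sign3; split_ifs <;> first | omega | norm_num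

namespace NearThreeTorsion

open WeierstrassCurve.Affine

variable {W : WeierstrassCurve.Affine ℚ} [W.IsShortNF] {p : ℕ} [Fact p.Prime] {α t : ℤ}
  {x₁ y₁ : ℚ}

theorem exists_nsmul_eq_some_multipleApprox (hp2 : p ≠ 2) (ha₄ : W.a₄ = 0)
    (h₁ : NearThreeTorsion p α t x₁ y₁) (hP : W.Nonsingular x₁ y₁) {k : ℕ} (hk : k % 3 ≠ 0) :
    ∃ x y, ∃ h : W.Nonsingular x y, k • Point.some _ _ hP = Point.some _ _ h ∧
      MultipleApprox p α t x₁ y₁ (sign3 k) k x y := by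
  induction k using Nat.strong_induction_on with
  | _ k ih =>
  rcases eq_or_ne k 1 with rfl | hk1
  · refine ⟨x₁, y₁, hP, one_nsmul _, PadicDvd.of_padicNorm_eq h₁.norm_x, ?_, ?_⟩ <;>
      simp [sign3, PadicDvd.zero]
  -- `jP` and `j'P` lie near the same 3-torsion point, so `(j + j')P` lies near its negative
  obtain ⟨j, j', rfl, hj, hjj'⟩ : ∃ j j', k = j + j' ∧ j % 3 ≠ 0 ∧ j % 3 = j' % 3 := by
    rcases (by omega : k % 3 = 1 ∨ k % 3 = 2) with h | h
    exacts [⟨k - 2, 2, by omega, by omega, by omega⟩, ⟨k - 1, 1, by omega, by omega, by omega⟩]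
  obtain ⟨a, b, ha, hjP, happ⟩ := ih j (by omega) hj
  obtain ⟨a', b', ha', hj'P, happ'⟩ := ih j' (by omega) (by omega)
  rw [show sign3 j' = sign3 j by rw [sign3, sign3, hjj']] at happ'
  obtain ⟨h, hsum⟩ := exists_some_add_some_eq ha₄ ha ha'
    (ne_zero_of_padicNorm_eq_zpow (happ.padicNorm_add_y hp2 h₁ (sign3_sq j) happ'))
  refine ⟨_, _, h, by rw [add_nsmul, hjP, hj'P, hsum], ?_⟩
  rw [sign3_add hj hjj']
  exact happ.add hp2 h₁ (sign3_sq j) happ'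

theorem exists_nsmul_eq_some (hp2 : p ≠ 2) (ha₄ : W.a₄ = 0) (h₁ : NearThreeTorsion p α t x₁ y₁)
    (hP : W.Nonsingular x₁ y₁) {k : ℕ} (hk : k % 3 ≠ 0)
    (hv : (padicValNat p k : ℤ) < 6 * α - 4 * t) :
    ∃ x y, ∃ h : W.Nonsingular x y, k • Point.some _ _ hP = Point.some _ _ h ∧
      NearThreeTorsion p (α + padicValNat p k) t x y := by
  obtain ⟨x, y, h, hkP, happ⟩ := h₁.exists_nsmul_eq_some_multipleApprox hp2 ha₄ hP hk
  have := h₁.one_le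
  have := h₁.two_mul_lt
  exact ⟨x, y, h, hkP, by omega, by omega,
    happ.padicNorm_x hp2 h₁ (sign3_sq k) (by omega) hv, happ.padicNorm_y h₁ (sign3_sq k)⟩

theorem exists_pow_nsmul_eq_some (hp2 : p ≠ 2) (hp3 : p ≠ 3) (ha₄ : W.a₄ = 0)
    (h₁ : NearThreeTorsion p α t x₁ y₁) (hP : W.Nonsingular x₁ y₁) (e : ℕ) :
    ∃ x y, ∃ h : W.Nonsingular x y, p ^ e • Point.some _ _ hP = Point.some _ _ h ∧
      NearThreeTorsion p (α + e) t x y := by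
  induction e with
  | zero => exact ⟨x₁, y₁, hP, by rw [pow_zero, one_nsmul], by simpa using h₁⟩
  | succ e ih =>
    obtain ⟨x, y, h, heP, hxy⟩ := ih
    have hv : padicValNat p p = 1 := padicValNat_self
    have hp3' : p % 3 ≠ 0 := fun h => hp3
      ((Nat.prime_dvd_prime_iff_eq Nat.prime_three Fact.out).1 (Nat.dvd_of_mod_eq_zero h)).symm
    have := hxy.two_mul_lt
    obtain ⟨x', y', h', hpP, hxy'⟩ := hxy.exists_nsmul_eq_some hp2 ha₄ h hp3' (by omega)
    refine ⟨x', y', h', by rw [pow_succ, mul_nsmul, heP, hpP], ?_⟩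
    rw [hv, Nat.cast_one] at hxy'
    rwa [Nat.cast_succ, ← add_assoc]

theorem exists_nsmul_eq_some_of_coprime (hp2 : p ≠ 2) (hp3 : p ≠ 3) (ha₄ : W.a₄ = 0)
    (h₁ : NearThreeTorsion p α t x₁ y₁) (hP : W.Nonsingular x₁ y₁) {k : ℕ} (hk : k ≠ 0)
    (hk3 : k.Coprime 3) :
    ∃ x y, ∃ h : W.Nonsingular x y, k • Point.some _ _ hP = Point.some _ _ h ∧
      NearThreeTorsion p (α + padicValNat p k) t x y := by
  obtain ⟨e, k₀, hpk₀, rfl⟩ := Nat.exists_eq_pow_mul_and_not_dvd hk p (Fact.out : p.Prime).ne_one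
  have hk₀ : k₀ ≠ 0 := right_ne_zero_of_mul hk
  have hk₀3 : k₀ % 3 ≠ 0 := fun h => (Nat.Prime.coprime_iff_not_dvd Nat.prime_three).1
    hk3.coprime_mul_left.symm (Nat.dvd_of_mod_eq_zero h)
  have hv₀ : padicValNat p k₀ = 0 := padicValNat.eq_zero_of_not_dvd hpk₀
  obtain ⟨x, y, h, heP, hxy⟩ := h₁.exists_pow_nsmul_eq_some hp2 hp3 ha₄ hP e
  have := hxy.two_mul_lt
  obtain ⟨x', y', h', hkP, hxy'⟩ := hxy.exists_nsmul_eq_some hp2 ha₄ h hk₀3 (by omega)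
  refine ⟨x', y', h', by rw [mul_nsmul, heP, hkP], ?_⟩
  rw [padicValNat.mul (pow_ne_zero e (Fact.out : p.Prime).ne_zero) hk₀, padicValNat.prime_pow,
    hv₀, add_zero]
  rwa [hv₀, Nat.cast_zero, add_zero] at hxy'

theorem of_equation (ha₄ : W.a₄ = 0) {x y : ℚ} (hP : W.Equation x y)
    (ha₆ : padicNorm p W.a₆ = (p : ℚ) ^ (-(2 * t))) (ht : t ≤ 2)
    (hx : padicNorm p x = (p : ℚ) ^ (-α)) (hα : 1 ≤ α) : NearThreeTorsion p α t x y := by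
  rw [equation_iff_of_isShortNF, ha₄, zero_mul, add_zero] at hP
  have hx3 : padicNorm p (x ^ 3) = (p : ℚ) ^ (-(3 * α)) := by
    rw [IsAbsoluteValue.abv_pow (padicNorm p), hx, ← zpow_natCast, ← zpow_mul]
    ring_nf
  have h3 : 2 * t < 3 * α := by
    by_contra hle
    obtain ⟨rfl, rfl⟩ : α = 1 ∧ t = 2 := by omega
    refine padicNorm_sq_ne_zpow_of_odd (p := p) (a := y) 1 ?_
    rw [padicNorm_eq_of_padicDvd_sub hx3 (v := 4) ?_ (by norm_num)]
    · norm_num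
    · rw [hP, add_sub_cancel_left]
      exact PadicDvd.of_padicNorm_eq ha₆
  refine ⟨hα, h3, hx, padicNorm_sq_eq_zpow_iff.1 (padicNorm_eq_of_padicDvd_sub ha₆ ?_ h3)⟩
  rw [hP, add_sub_cancel_right]
  exact PadicDvd.of_padicNorm_eq hx3

end NearThreeTorsion

namespace Mordell

instance (m : ℤ) : (Mordell m).IsShortNF := ⟨rfl, rfl, rfl⟩

variable {p : ℕ} [hp : Fact p.Prime] {m : ℤ}

theorem padicValInt_le_two (hcf : CubeFree m) : padicValInt p m ≤ 2 := by
  by_contra! h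
  have h3 : (p : ℤ) ^ 3 ∣ m := (padicValInt_dvd_iff 3 m).2 (Or.inr h)
  have := hp.out.one_lt
  rcases Int.isUnit_iff.1 (hcf p h3) with h1 | h1 <;> omega

theorem padicNorm_a₆ (hp2 : p ≠ 2) (hp3 : p ≠ 3) (hm : m ≠ 0) :
    padicNorm p (Mordell m).a₆ = (p : ℚ) ^ (-(2 * (padicValInt p m : ℤ))) := by
  have h432 : padicNorm p ((2 ^ 4 * 3 ^ 3 : ℕ) : ℚ) = 1 := by
    refine (padicNorm.nat_eq_one_iff _).2 fun h => ?_
    rcases (Nat.Prime.dvd_mul hp.out).1 h with h | h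
    · exact hp2 ((Nat.prime_dvd_prime_iff_eq hp.out Nat.prime_two).1 (hp.out.dvd_of_dvd_pow h))
    · exact hp3 ((Nat.prime_dvd_prime_iff_eq hp.out Nat.prime_three).1 (hp.out.dvd_of_dvd_pow h))
  rw [show (Mordell m).a₆ = -(((2 ^ 4 * 3 ^ 3 : ℕ) : ℚ) * (m : ℚ) ^ 2) by simp [Mordell],
    padicNorm.neg, padicNorm.mul, h432, one_mul, padicNorm_sq_eq_zpow_iff,
    padicNorm.eq_zpow_of_nonzero (Int.cast_ne_zero.2 hm), padicValRat.of_int]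

end Mordell

theorem ord_of_x_numerator_general
    (m : ℤ) (hm : m ≠ 0) (hcf : CubeFree m)
    (p : ℕ) (hp : p.Prime) (hp3 : 3 < p)
    (Q : (Mordell m).Point)
    (hord : 0 < padicValRat p (xCoord Q))
    (k : ℕ) (hk : 1 ≤ k) (hk3 : Nat.Coprime k 3) :
    padicValRat p (xCoord (k • Q)) =
      padicValRat p (xCoord Q) + (padicValNat p k : ℤ) := by
  have := Fact.mk hp
  obtain ⟨x₁, y₁, hP, rfl⟩ : ∃ x y, ∃ h : (Mordell m).Nonsingular x y, Q = .some x y h := by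
    cases Q with
    | zero => simp [xCoord] at hord
    | some x y h => exact ⟨x, y, h, rfl⟩
  change 0 < padicValRat p x₁ at hord
  have hx₁ : x₁ ≠ 0 := by
    rintro rfl
    simp at hord
  have h₁ : NearThreeTorsion p (padicValRat p x₁) (padicValInt p m) x₁ y₁ :=
    .of_equation rfl hP.1 (Mordell.padicNorm_a₆ (by omega) (by omega) hm)
      (by exact_mod_cast Mordell.padicValInt_le_two hcf) (padicNorm.eq_zpow_of_nonzero hx₁) hord
  obtain ⟨x, y, h, hkP, hxy⟩ :=
    h₁.exists_nsmul_eq_some_of_coprime (by omega) (by omega) rfl hP (by omega) hk3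
  rw [hkP]
  exact padicValRat_eq_of_padicNorm_eq hxy.norm_x

theorem ord_of_x_numerator
    (m : ℤ) (hm : m ≠ 0) (hcf : CubeFree m)
    (p : ℕ) (hp : p.Prime) (hp3 : 3 < p)
    (Q : (Mordell m).Point) (hQ : ∀ k : ℕ, 0 < k → k • Q ≠ 0)
    (hord : 0 < padicValRat p (xCoord Q))
    (k : ℕ) (hk : 1 ≤ k) (hk3 : Nat.Coprime k 3) :
    padicValRat p (xCoord (k • Q)) =
      padicValRat p (xCoord Q) + (padicValNat p k : ℤ) :=
  ord_of_x_numerator_general m hm hcf p hp hp3 Q hord k hk hk3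
end

section
/- Let m be a nonzero integer, let E be the elliptic curve y^2 = x^3 - 432m^2 over ℚ, let p > 3 be a prime with p ∤ m, and let Q ∈ E(ℚ) be a point of infinite order with ord_p(x(Q)) > 0. Then ord_p(x(3Q)) = -2·ord_p(x(Q)). -/
/-!
Put `b = -432 m²`, a `p`-adic unit. For `P = (x, y)` on `y² = x³ + b` the division polynomials
`ψ₃ = 3x(x³ + 4b)` and `φ₃ = x⁹ - 96b x⁶ + 48b² x³ + 64b³` give `x(3P) · ψ₃(x)² = φ₃(x)`.
When `ord_p x > 0`, both `x³ + 4b` and `φ₃(x) ≡ 64b³` are `p`-adic units (as `p > 3`), so taking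
valuations gives `ord_p x(3P) + 2 ord_p x = 0`.
-/

open WeierstrassCurve

open Polynomial

namespace WeierstrassCurve.Affine

variable {F : Type*} [Field F] {W : Affine F} [W.IsShortNF]

theorem negY_of_isShortNF (x y : F) : W.negY x y = -y := by
  simp [negY]

theorem addX_of_isShortNF (x₁ x₂ ℓ : F) : W.addX x₁ x₂ ℓ = ℓ ^ 2 - x₁ - x₂ := by
  simp [addX]

theorem addY_of_isShortNF (x₁ x₂ y₁ ℓ : F) :
    W.addY x₁ x₂ y₁ ℓ = -(ℓ * (W.addX x₁ x₂ ℓ - x₁) + y₁) := by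
  simp [addY, negAddY, negY]

theorem Y_ne_negY_of_isShortNF {x y : F} (hψ₂ : 2 * y ≠ 0) : y ≠ W.negY x y := by
  rw [negY_of_isShortNF]; intro hy; exact hψ₂ (by linear_combination hy)

theorem equation_iff_of_a₄_eq_zero (ha₄ : W.a₄ = 0) {x y : F} :
    W.Equation x y ↔ y ^ 2 = x ^ 3 + W.a₆ := by
  simp [equation_iff, ha₄]

theorem Y_ne_zero_of_a₄_eq_zero (ha₄ : W.a₄ = 0) {x y : F} (h : W.Equation x y)
    (hx : x ^ 3 + W.a₆ ≠ 0) : y ≠ 0 := by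
  rintro rfl
  rw [equation_iff_of_a₄_eq_zero ha₄] at h
  exact hx (by linear_combination -h)

variable [DecidableEq F]

theorem addX_slope_add_add_mul_sq_of_isShortNF {x₁ x₂ : F} (y₁ y₂ : F) (hx : x₁ ≠ x₂) :
    (W.addX x₁ x₂ (W.slope x₁ x₂ y₁ y₂) + x₁ + x₂) * (x₁ - x₂) ^ 2 = (y₁ - y₂) ^ 2 := by
  rw [addX_of_isShortNF, slope_of_X_ne hx, div_pow]
  field_simp [sub_ne_zero.mpr hx]
  ring

theorem slope_self_mul_of_a₄_eq_zero (ha₄ : W.a₄ = 0) {x y : F} (hψ₂ : 2 * y ≠ 0) :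
    W.slope x x y y * (2 * y) = 3 * x ^ 2 := by
  rw [slope_of_Y_ne rfl (Y_ne_negY_of_isShortNF hψ₂), negY_of_isShortNF, a₁_of_isShortNF,
    a₂_of_isShortNF, ha₄, div_mul_eq_mul_div, div_eq_iff (by rwa [sub_neg_eq_add, ← two_mul])]
  ring

theorem addX_self_sub_mul_of_a₄_eq_zero (ha₄ : W.a₄ = 0) {x y : F} (h : W.Equation x y)
    (hψ₂ : 2 * y ≠ 0) :
    (W.addX x x (W.slope x x y y) - x) * (4 * y ^ 2) = -(3 * x * (x ^ 3 + 4 * W.a₆)) := by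
  rw [addX_of_isShortNF]
  linear_combination (2 * y * W.slope x x y y + 3 * x ^ 2) *
      slope_self_mul_of_a₄_eq_zero ha₄ (x := x) hψ₂ - 12 * x * (equation_iff_of_a₄_eq_zero ha₄).mp h

theorem three_smul_some_of_a₄_eq_zero (ha₄ : W.a₄ = 0) {x y : F} (h : W.Nonsingular x y)
    (hψ₂ : 2 * y ≠ 0) (hψ₃ : 3 * x * (x ^ 3 + 4 * W.a₆) ≠ 0) :
    ∃ (x₃ y₃ : F) (h₃ : W.Nonsingular x₃ y₃), 3 • Point.some x y h = Point.some x₃ y₃ h₃ ∧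
      x₃ * (3 * x * (x ^ 3 + 4 * W.a₆)) ^ 2 =
        x ^ 9 - 96 * W.a₆ * x ^ 6 + 48 * W.a₆ ^ 2 * x ^ 3 + 64 * W.a₆ ^ 3 := by
  have hE : y ^ 2 = x ^ 3 + W.a₆ := (equation_iff_of_a₄_eq_zero ha₄).mp h.1
  have hℓ := slope_self_mul_of_a₄_eq_zero ha₄ (x := x) hψ₂
  have hd := addX_self_sub_mul_of_a₄_eq_zero ha₄ h.1 hψ₂
  set ℓ := W.slope x x y y
  set x₂ := W.addX x x ℓ
  have hx₂' : x₂ = ℓ ^ 2 - x - x := addX_of_isShortNF x x ℓ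
  set y₂ := W.addY x x y ℓ
  have hx₂ : x₂ ≠ x := by
    intro hx; rw [hx, sub_self, zero_mul, eq_comm, neg_eq_zero] at hd; exact hψ₃ hd
  set x₃ := W.addX x₂ x (W.slope x₂ x y₂ y)
  have hx₃ : x₃ * (x₂ - x) ^ 2 = x * (x₂ - x) ^ 2 + 6 * x ^ 2 * (x₂ - x) + 4 * y ^ 2 := by
    have hy₂ : y₂ = -(ℓ * (x₂ - x) + y) := addY_of_isShortNF x x y ℓ
    linear_combination addX_slope_add_add_mul_sq_of_isShortNF (W := W) y₂ y hx₂ +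
      (y₂ - ℓ * (x₂ - x) - 3 * y) * hy₂ + 2 * (x₂ - x) * hℓ - (x₂ - x) ^ 2 * hx₂'
  obtain ⟨h₃, h3P⟩ : ∃ h₃,
      3 • Point.some x y h = Point.some x₃ (W.addY x₂ x y₂ (W.slope x₂ x y₂ y)) h₃ :=
    ⟨_, by rw [show 3 = 2 + 1 from rfl, succ_nsmul, two_nsmul,
      Point.add_self_of_Y_ne (Y_ne_negY_of_isShortNF hψ₂), Point.add_of_X_ne hx₂]⟩
  refine ⟨x₃, _, h₃, h3P, ?_⟩
  calc x₃ * (3 * x * (x ^ 3 + 4 * W.a₆)) ^ 2 = x₃ * ((x₂ - x) * (4 * y ^ 2)) ^ 2 := by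
        rw [hd, neg_sq]
    _ = 16 * y ^ 4 * (x₃ * (x₂ - x) ^ 2) := by ring
    _ = x * ((x₂ - x) * (4 * y ^ 2)) ^ 2 + 24 * x ^ 2 * y ^ 2 * ((x₂ - x) * (4 * y ^ 2)) +
          64 * (y ^ 2) ^ 3 := by rw [hx₃]; ring
    _ = x ^ 9 - 96 * W.a₆ * x ^ 6 + 48 * W.a₆ ^ 2 * x ^ 3 + 64 * W.a₆ ^ 3 := by
        rw [hd, hE]; ring

end WeierstrassCurve.Affine

namespace padicNorm

variable {p : ℕ} [Fact p.Prime]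

theorem lt_one_of_padicValRat_pos {q : ℚ} (hq : 0 < padicValRat p q) : padicNorm p q < 1 := by
  have hq0 : q ≠ 0 := by rintro rfl; simp at hq
  rw [padicNorm.eq_zpow_of_nonzero hq0]
  exact zpow_lt_one_of_neg₀ (mod_cast (Fact.out : p.Prime).one_lt) (neg_neg_of_pos hq)

theorem padicValRat_eq_zero_of_eq_one {q : ℚ} (hq : padicNorm p q = 1) :
    padicValRat p q = 0 := by
  rcases eq_or_ne q 0 with rfl | hq0
  · simp
  rw [padicNorm.eq_zpow_of_nonzero hq0,
    zpow_eq_one_iff_right₀ (Nat.cast_nonneg p) (mod_cast (Fact.out : p.Prime).ne_one)] at hq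
  exact neg_eq_zero.mp hq

theorem mul_add_eq_one {u w c : ℚ} (hu : padicNorm p u < 1) (hw : padicNorm p w ≤ 1)
    (hc : padicNorm p c = 1) : padicNorm p (u * w + c) = 1 := by
  have huw : padicNorm p (u * w) < 1 := by
    rw [padicNorm.mul]
    exact mul_lt_one_of_nonneg_of_lt_one_left (padicNorm.nonneg u) hu hw
  rw [padicNorm.add_eq_max_of_ne (by rw [hc]; exact huw.ne), hc, max_eq_right huw.le]

theorem aeval_le_one (f : ℤ[X]) {q : ℚ} (hq : padicNorm p q ≤ 1) :
    padicNorm p (aeval q f) ≤ 1 := by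
  rw [aeval_eq_sum_range]
  refine padicNorm.sum_le' (fun i _ => ?_) zero_le_one
  rw [zsmul_eq_mul, padicNorm.mul, IsAbsoluteValue.abv_pow (padicNorm p)]
  exact mul_le_one₀ (padicNorm.of_int _) (pow_nonneg (padicNorm.nonneg q) i)
    (pow_le_one₀ (padicNorm.nonneg q) hq)

theorem aeval_eq_one (f : ℤ[X]) {q : ℚ} (hq : padicNorm p q < 1)
    (hf : ¬ (p : ℤ) ∣ f.eval 0) : padicNorm p (aeval q f) = 1 := by
  rw [← coeff_zero_eq_eval_zero] at hf
  rw [← X_mul_divX_add f, map_add, map_mul, aeval_X, aeval_C, algebraMap_int_eq, eq_intCast]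
  exact mul_add_eq_one hq (aeval_le_one _ hq.le) ((padicNorm.int_eq_one_iff _).mpr hf)

theorem padicValRat_eq_neg_two_mul_of_mul_sq {a c w u : ℚ} (h : a * (c * w) ^ 2 = u)
    (hw : padicNorm p w = 1) (hu : padicNorm p u = 1) :
    padicValRat p a = -2 * padicValRat p c := by
  have hac : padicNorm p (a * c ^ 2) = 1 := by
    rw [← hu, ← h, mul_pow, padicNorm.mul, padicNorm.mul, padicNorm.mul,
      IsAbsoluteValue.abv_pow (padicNorm p) w, hw, one_pow, mul_one]
  have ha : a ≠ 0 := by rintro rfl; simp at hac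
  have hc : c ≠ 0 := by rintro rfl; simp at hac
  have hv := padicValRat_eq_zero_of_eq_one hac
  rw [padicValRat.mul ha (pow_ne_zero 2 hc), padicValRat.pow c] at hv
  push_cast at hv
  linarith

end padicNorm

theorem not_dvd_two_pow_mul_three_pow_mul_pow {p : ℕ} (hp : p.Prime) (hp3 : 3 < p) {b : ℤ}
    (hb : ¬ (p : ℤ) ∣ b) (i j k : ℕ) : ¬ (p : ℤ) ∣ 2 ^ i * 3 ^ j * b ^ k := by
  have hpZ : Prime (p : ℤ) := Nat.prime_iff_prime_int.mp hp
  have hp2 : ¬ (p : ℤ) ∣ 2 := fun h => by have := Int.le_of_dvd two_pos h; omega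
  have hp3' : ¬ (p : ℤ) ∣ 3 := fun h => by have := Int.le_of_dvd three_pos h; omega
  simp only [hpZ.dvd_mul, not_or]
  exact ⟨⟨mt hpZ.dvd_of_dvd_pow hp2, mt hpZ.dvd_of_dvd_pow hp3'⟩, mt hpZ.dvd_of_dvd_pow hb⟩

section padicUnits

variable {p : ℕ} [Fact p.Prime] {b : ℤ} {x : ℚ}

theorem padicNorm_pow_three_add (hb : ¬ (p : ℤ) ∣ b) (hx : padicNorm p x < 1) :
    padicNorm p (x ^ 3 + b) = 1 := by
  have := padicNorm.aeval_eq_one (X ^ 3 + C b) hx (by simpa using hb)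
  simpa [map_intCast] using this

theorem padicNorm_three_mul_pow_three_add_four_mul (hp3 : 3 < p) (hb : ¬ (p : ℤ) ∣ b)
    (hx : padicNorm p x < 1) : padicNorm p (3 * (x ^ 3 + 4 * b)) = 1 := by
  have := padicNorm.aeval_eq_one (C 3 * (X ^ 3 + C (4 * b))) hx (by
    convert not_dvd_two_pow_mul_three_pow_mul_pow Fact.out hp3 hb 2 1 1 using 2
    simp only [eval_mul, eval_add, eval_pow, eval_C, eval_X]; ring)
  simpa [map_intCast, map_ofNat] using this

theorem padicNorm_φ₃ (hp3 : 3 < p) (hb : ¬ (p : ℤ) ∣ b) (hx : padicNorm p x < 1) :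
    padicNorm p (x ^ 9 - 96 * b * x ^ 6 + 48 * b ^ 2 * x ^ 3 + 64 * b ^ 3) = 1 := by
  have := padicNorm.aeval_eq_one
    (X ^ 9 - C (96 * b) * X ^ 6 + C (48 * b ^ 2) * X ^ 3 + C (64 * b ^ 3)) hx (by
      convert not_dvd_two_pow_mul_three_pow_mul_pow Fact.out hp3 hb 6 0 3 using 2
      simp)
  simpa [map_intCast, map_ofNat] using this

end padicUnits

instance (m : ℤ) : (Mordell m).IsShortNF := ⟨rfl, rfl, rfl⟩

theorem ord_of_x_triple_general
    (m : ℤ) (p : ℕ) (hp : p.Prime) (hp3 : 3 < p)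
    (hpm : ¬ (p : ℤ) ∣ m)
    (Q : (Mordell m).Point)
    (hord : 0 < padicValRat p (xCoord Q)) :
    padicValRat p (xCoord ((3 : ℕ) • Q)) = -2 * padicValRat p (xCoord Q) := by
  have := Fact.mk hp
  obtain _ | ⟨x, y, h⟩ := Q
  · simp [xCoord] at hord
  have hx : padicNorm p x < 1 := padicNorm.lt_one_of_padicValRat_pos hord
  have hx0 : x ≠ 0 := by rintro rfl; simp [xCoord] at hord
  set B : ℤ := -432 * m ^ 2
  have ha₆ : (Mordell m).a₆ = B := by simp [Mordell, B]
  have hB : ¬ (p : ℤ) ∣ B := by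
    simpa [B] using not_dvd_two_pow_mul_three_pow_mul_pow hp hp3 hpm 4 3 2
  have hψ₃ := padicNorm_three_mul_pow_three_add_four_mul hp3 hB hx
  have hy : y ≠ 0 := Affine.Y_ne_zero_of_a₄_eq_zero rfl h.1 (by
    rw [ha₆]; intro h0; simpa [h0] using padicNorm_pow_three_add hB hx)
  obtain ⟨x₃, y₃, h₃, h3Q, hx₃⟩ := Affine.three_smul_some_of_a₄_eq_zero rfl h
    (mul_ne_zero two_ne_zero hy) (by
      rw [ha₆, mul_right_comm]; exact mul_ne_zero (fun h0 => by simp [h0] at hψ₃) hx0)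
  rw [ha₆] at hx₃
  rw [h3Q]
  show padicValRat p x₃ = -2 * padicValRat p x
  exact padicNorm.padicValRat_eq_neg_two_mul_of_mul_sq (by rw [← hx₃]; ring) hψ₃
    (padicNorm_φ₃ hp3 hB hx)

theorem ord_of_x_triple
    (m : ℤ) (hm : m ≠ 0) (p : ℕ) (hp : p.Prime) (hp3 : 3 < p)
    (hpm : ¬ (p : ℤ) ∣ m)
    (Q : (Mordell m).Point) (hQ : ∀ k : ℕ, 0 < k → k • Q ≠ 0)
    (hord : 0 < padicValRat p (xCoord Q)) :
    padicValRat p (xCoord ((3 : ℕ) • Q)) = -2 * padicValRat p (xCoord Q) :=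
  ord_of_x_triple_general m p hp hp3 hpm Q hord
end

section
/- Let m be a nonzero cube-free integer, let Q be a point of infinite order on E: y^2 = x^3 - 432m^2, and let p ≥ 5 be a prime dividing m. Then for every n ≥ 1: p divides A_n if and only if p divides A_1 and 3 does not divide n. In particular, a prime p ≥ 5 of bad reduction dividing some term A_n must divide A_1. -/
open WeierstrassCurve

/-!
Write `D = 432 m²` and `e = v_p(m)`; cube-freeness gives `e ∈ {1, 2}`, so `v_p(D) = 2e`. A rational
point `(x, y)` reduces to the cusp of `y² = x³` mod `p` exactly when `v_p(x) ≥ 1`, and then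
`v_p(x) ≥ e` and `v_p(y) = e`; the residue of `y / p^e` mod `p` is one of the two square roots of
`-D / p^(2e)`, which splits these points into two classes interchanged by `P ↦ -P`. Comparing
valuations in Vieta's relations for the three points of a line (which sum to zero) shows that the
non-cuspidal points, the class of `Q` and the class of `-Q` add like `0, 1, 2` in `ℤ/3`. So if `Q`
reduces to the cusp then `nQ` does exactly when `3 ∤ n`, and otherwise no multiple of `Q` does.
Finally `p ∣ A_n` iff `v_p(A_n / B_n²) ≥ 1`, as `A_n` and `B_n` are coprime.
-/

section

variable {p : ℕ}

local notation "v" => padicValRat p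

/-- `a ∈ p^k ℤ_(p)`: unlike `k ≤ v a`, this holds for `a = 0`, where Mathlib's valuation takes the
junk value `0`. -/
def PadicValGE (p : ℕ) (k : ℤ) (a : ℚ) : Prop :=
  a = 0 ∨ k ≤ padicValRat p a

namespace PadicValGE

variable {k l : ℤ} {a b : ℚ}

lemma padicValRat_self (a : ℚ) : PadicValGE p (v a) a :=
  .inr le_rfl

lemma iff_of_ne_zero (ha : a ≠ 0) : PadicValGE p k a ↔ k ≤ v a := by
  simp [PadicValGE, ha]

lemma mono (h : PadicValGE p k a) (hlk : l ≤ k) : PadicValGE p l a :=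
  h.imp_right hlk.trans

@[simp]
lemma neg_iff : PadicValGE p k (-a) ↔ PadicValGE p k a := by
  simp [PadicValGE]

variable [Fact p.Prime]

lemma add (ha : PadicValGE p k a) (hb : PadicValGE p k b) : PadicValGE p k (a + b) := by
  by_cases hab : a + b = 0
  · exact .inl hab
  rcases ha with rfl | ha
  · simpa using hb
  rcases hb with rfl | hb
  · exact .inr (by rwa [add_zero])
  exact .inr ((le_min ha hb).trans (padicValRat.min_le_padicValRat_add hab))

lemma sub (ha : PadicValGE p k a) (hb : PadicValGE p k b) : PadicValGE p k (a - b) := by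
  simpa [sub_eq_add_neg] using ha.add (neg_iff.2 hb)

lemma mul (ha : PadicValGE p k a) (hb : PadicValGE p l b) : PadicValGE p (k + l) (a * b) := by
  by_cases ha0 : a = 0
  · simp [PadicValGE, ha0]
  by_cases hb0 : b = 0
  · simp [PadicValGE, hb0]
  rw [iff_of_ne_zero ha0] at ha
  rw [iff_of_ne_zero hb0] at hb
  rw [iff_of_ne_zero (mul_ne_zero ha0 hb0), padicValRat.mul ha0 hb0]
  omega

end PadicValGE

/-- For points reducing to the cusp (`v y = e`), this compares the residues of `y₁ / p^e` and
`y₂ / p^e` mod `p`, i.e. the components of the special fibre that the points reduce to. -/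
def SameComponent (p : ℕ) (e : ℤ) (y₁ y₂ : ℚ) : Prop :=
  PadicValGE p (e + 1) (y₁ - y₂)

namespace SameComponent

variable {e : ℤ} {y₁ y₂ : ℚ}

lemma symm (h : SameComponent p e y₁ y₂) : SameComponent p e y₂ y₁ := by
  rw [SameComponent, ← neg_sub, PadicValGE.neg_iff]
  exact h

lemma neg_comm (h : SameComponent p e y₁ (-y₂)) : SameComponent p e y₂ (-y₁) := by
  rw [SameComponent, sub_neg_eq_add, add_comm y₂]
  rwa [SameComponent, sub_neg_eq_add] at h

end SameComponent

structure BadPrimeData (p : ℕ) (D : ℚ) (e : ℤ) : Prop where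
  pos : 0 < D
  val_eq : padicValRat p D = 2 * e
  one_le : 1 ≤ e
  le_two : e ≤ 2
  val_two : padicValRat p 2 = 0

lemma BadPrimeData.x_ne_zero {D : ℚ} {e : ℤ} {x y : ℚ} (hb : BadPrimeData p D e)
    (h : y ^ 2 = x ^ 3 - D) : x ≠ 0 := by
  rintro rfl
  nlinarith [hb.pos, sq_nonneg y]

/-- The intersections, with multiplicity, of the line `y = L x + ν` with `y² = x³ - D`; in the
group law these three points sum to zero. -/
structure IsLineSection (D L ν x₁ y₁ x₂ y₂ x₃ y₃ : ℚ) : Prop where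
  line₁ : y₁ = L * x₁ + ν
  line₂ : y₂ = L * x₂ + ν
  line₃ : y₃ = L * x₃ + ν
  cubic : ∀ x, x ^ 3 - D - (L * x + ν) ^ 2 = (x - x₁) * (x - x₂) * (x - x₃)

namespace IsLineSection

variable {D L ν x₁ y₁ x₂ y₂ x₃ y₃ : ℚ}

lemma swap (h : IsLineSection D L ν x₁ y₁ x₂ y₂ x₃ y₃) : IsLineSection D L ν x₂ y₂ x₁ y₁ x₃ y₃ :=
  ⟨h.line₂, h.line₁, h.line₃, fun x => by rw [h.cubic]; ring⟩

lemma rotate (h : IsLineSection D L ν x₁ y₁ x₂ y₂ x₃ y₃) :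
    IsLineSection D L ν x₂ y₂ x₃ y₃ x₁ y₁ :=
  ⟨h.line₂, h.line₃, h.line₁, fun x => by rw [h.cubic]; ring⟩

lemma equation₁ (h : IsLineSection D L ν x₁ y₁ x₂ y₂ x₃ y₃) : y₁ ^ 2 = x₁ ^ 3 - D := by
  linear_combination (y₁ + L * x₁ + ν) * h.line₁ - h.cubic x₁

lemma equation₂ (h : IsLineSection D L ν x₁ y₁ x₂ y₂ x₃ y₃) : y₂ ^ 2 = x₂ ^ 3 - D :=
  h.rotate.equation₁

lemma equation₃ (h : IsLineSection D L ν x₁ y₁ x₂ y₂ x₃ y₃) : y₃ ^ 2 = x₃ ^ 3 - D :=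
  h.rotate.rotate.equation₁

lemma vieta₁ (h : IsLineSection D L ν x₁ y₁ x₂ y₂ x₃ y₃) : x₁ + x₂ + x₃ = L ^ 2 := by
  linear_combination (h.cubic 1 + h.cubic (-1) - 2 * h.cubic 0) / 2

lemma vieta₂ (h : IsLineSection D L ν x₁ y₁ x₂ y₂ x₃ y₃) :
    x₁ * x₂ + x₁ * x₃ + x₂ * x₃ = -(2 * L * ν) := by
  linear_combination (h.cubic (-1) - h.cubic 1) / 2

lemma vieta₃ (h : IsLineSection D L ν x₁ y₁ x₂ y₂ x₃ y₃) : x₁ * x₂ * x₃ = ν ^ 2 + D := by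
  linear_combination h.cubic 0

lemma slope_mul_add (h : IsLineSection D L ν x₁ y₁ x₂ y₂ x₃ y₃) :
    L * (y₁ + y₂) = x₁ ^ 2 + x₁ * x₂ + x₂ ^ 2 := by
  linear_combination L * h.line₁ + L * h.line₂ - (x₁ + x₂) * h.vieta₁ + h.vieta₂

end IsLineSection

lemma sq_add_mul_add_sq_pos {a : ℚ} (b : ℚ) (ha : a ≠ 0) : 0 < a ^ 2 + a * b + b ^ 2 := by
  have : 0 < a ^ 2 := by positivity
  nlinarith [sq_nonneg (a + b), sq_nonneg b]

variable [Fact p.Prime]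

lemma padicValRat_add_eq_of_padicValGE {a b : ℚ} (ha : a ≠ 0) (hb : PadicValGE p (v a + 1) b) :
    a + b ≠ 0 ∧ v (a + b) = v a := by
  rcases hb with rfl | hb
  · simpa using ha
  by_cases hb0 : b = 0
  · simpa [hb0] using ha
  have hab : a + b ≠ 0 := by
    intro h
    rw [eq_neg_of_add_eq_zero_right h, padicValRat.neg] at hb
    omega
  exact ⟨hab, padicValRat.add_eq_of_lt hab ha hb0 (by omega)⟩

namespace BadPrimeData

variable {D : ℚ} {e : ℤ} {x y : ℚ}

lemma y_ne_zero (hb : BadPrimeData p D e) (h : y ^ 2 = x ^ 3 - D) : y ≠ 0 := by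
  rintro rfl
  have hx := congrArg (padicValRat p) (show x ^ 3 = D by linear_combination -h)
  rw [padicValRat.pow, hb.val_eq] at hx
  have := hb.one_le
  have := hb.le_two
  omega

lemma padicValRat_of_singular (hb : BadPrimeData p D e) (h : y ^ 2 = x ^ 3 - D)
    (hx : 1 ≤ v x) : e ≤ v x ∧ v y = e := by
  have hsum : x ^ 3 + -D ≠ 0 := by
    rw [← sub_eq_add_neg, ← h]
    exact pow_ne_zero _ (hb.y_ne_zero h)
  have hne : v (x ^ 3) ≠ v (-D) := by
    rw [padicValRat.pow, padicValRat.neg, hb.val_eq]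
    have := hb.le_two
    omega
  have hmin := padicValRat.add_eq_min hsum (pow_ne_zero _ (hb.x_ne_zero h))
    (neg_ne_zero.2 hb.pos.ne') hne
  rw [← sub_eq_add_neg, ← h, padicValRat.pow, padicValRat.pow, padicValRat.neg, hb.val_eq] at hmin
  have := hb.le_two
  push_cast at hmin
  omega

lemma padicValGE_of_singular (hb : BadPrimeData p D e) (h : y ^ 2 = x ^ 3 - D)
    (hx : 1 ≤ v x) : PadicValGE p e x :=
  .inr (hb.padicValRat_of_singular h hx).1

lemma add_of_sameComponent {y' : ℚ} (hb : BadPrimeData p D e) (h : y ^ 2 = x ^ 3 - D)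
    (hx : 1 ≤ v x) (hs : SameComponent p e y y') : y + y' ≠ 0 ∧ v (y + y') = e := by
  have h2y : v (2 * y) = e := by
    rw [padicValRat.mul two_ne_zero (hb.y_ne_zero h), hb.val_two,
      (hb.padicValRat_of_singular h hx).2, zero_add]
  have := padicValRat_add_eq_of_padicValGE (mul_ne_zero two_ne_zero (hb.y_ne_zero h))
    (h2y ▸ PadicValGE.neg_iff.2 hs : PadicValGE p (v (2 * y) + 1) (-(y - y')))
  rwa [show 2 * y + -(y - y') = y + y' by ring, h2y] at this

end BadPrimeData

namespace IsLineSection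

variable {D : ℚ} {e : ℤ} {L ν x₁ y₁ x₂ y₂ x₃ y₃ : ℚ}

/-- In Vieta's relations `x₁x₂` dominates `-(2Lν)`, and then `ν²` dominates `ν² + D = x₁x₂x₃`,
whose valuation comes out too small for `1 ≤ v x₃`. -/
lemma false_of_nonsingular_of_le (hb : BadPrimeData p D e)
    (hS : IsLineSection D L ν x₁ y₁ x₂ y₂ x₃ y₃) (hle : v x₁ ≤ v x₂) (h₂ : v x₂ ≤ 0)
    (h₃ : 1 ≤ v x₃) : False := by
  have hx₁ := hb.x_ne_zero hS.equation₁
  have hx₂ := hb.x_ne_zero hS.equation₂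
  have h₃' : PadicValGE p 1 x₃ := .inr h₃
  have h₁₂ : PadicValGE p (v x₁) (x₁ + x₂) :=
    (PadicValGE.padicValRat_self x₁).add ((PadicValGE.padicValRat_self x₂).mono hle)
  have hsmall : PadicValGE p (v (x₁ * x₂) + 1) ((x₁ + x₂) * x₃) := by
    refine (h₁₂.mul h₃').mono ?_
    rw [padicValRat.mul hx₁ hx₂]
    omega
  obtain ⟨hLν, hvLν⟩ := padicValRat_add_eq_of_padicValGE (mul_ne_zero hx₁ hx₂) hsmall
  rw [show x₁ * x₂ + (x₁ + x₂) * x₃ = -(2 * L * ν) by linear_combination hS.vieta₂] at hLν hvLν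
  have hL : L ≠ 0 := by rintro rfl; simp at hLν
  have hν : ν ≠ 0 := by rintro rfl; simp at hLν
  rw [padicValRat.neg, padicValRat.mul (by simpa using hL) hν, padicValRat.mul two_ne_zero hL,
    hb.val_two, padicValRat.mul hx₁ hx₂] at hvLν
  have hvL : v x₁ ≤ 2 * v L := by
    have := h₁₂.add (h₃'.mono (by omega))
    rw [hS.vieta₁, PadicValGE.iff_of_ne_zero (pow_ne_zero _ hL), padicValRat.pow] at this
    push_cast at this
    exact this
  have hD : PadicValGE p (v (ν ^ 2) + 1) D := by
    rw [PadicValGE.iff_of_ne_zero hb.pos.ne', padicValRat.pow, hb.val_eq]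
    have := hb.one_le
    push_cast
    omega
  have hvD := padicValRat_add_eq_of_padicValGE (pow_ne_zero 2 hν) hD
  rw [← hS.vieta₃, padicValRat.mul (mul_ne_zero hx₁ hx₂) (hb.x_ne_zero hS.equation₃),
    padicValRat.mul hx₁ hx₂, padicValRat.pow] at hvD
  push_cast at hvD
  omega

lemma nonsingular_of_nonsingular (hb : BadPrimeData p D e)
    (hS : IsLineSection D L ν x₁ y₁ x₂ y₂ x₃ y₃) (h₁ : v x₁ ≤ 0) (h₂ : v x₂ ≤ 0) : v x₃ ≤ 0 := by
  by_contra! h₃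
  rcases le_total (v x₁) (v x₂) with hle | hle
  · exact hS.false_of_nonsingular_of_le hb hle h₂ h₃
  · exact hS.swap.false_of_nonsingular_of_le hb hle h₁ h₃

lemma padicValGE_quadratic (hb : BadPrimeData p D e) (hS : IsLineSection D L ν x₁ y₁ x₂ y₂ x₃ y₃)
    (h₁ : 1 ≤ v x₁) (h₂ : 1 ≤ v x₂) : PadicValGE p (2 * e) (x₁ ^ 2 + x₁ * x₂ + x₂ ^ 2) := by
  have hx₁ : PadicValGE p e x₁ := hb.padicValGE_of_singular hS.equation₁ h₁
  have hx₂ : PadicValGE p e x₂ := hb.padicValGE_of_singular hS.equation₂ h₂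
  rw [two_mul, sq, sq]
  exact ((hx₁.mul hx₁).add (hx₁.mul hx₂)).add (hx₂.mul hx₂)

lemma sameComponent_neg_of_nonsingular (hb : BadPrimeData p D e)
    (hS : IsLineSection D L ν x₁ y₁ x₂ y₂ x₃ y₃) (h₁ : v x₁ ≤ 0) (h₂ : 1 ≤ v x₂)
    (h₃ : 1 ≤ v x₃) : SameComponent p e y₂ (-y₃) := by
  have hK := hS.rotate.slope_mul_add
  have hq := sq_add_mul_add_sq_pos x₃ (hb.x_ne_zero hS.equation₂)
  have hL : L ≠ 0 := by rintro rfl; linarith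
  have hy : y₂ + y₃ ≠ 0 := by intro h; rw [h, mul_zero] at hK; linarith
  obtain ⟨-, hvL⟩ := padicValRat_add_eq_of_padicValGE (hb.x_ne_zero hS.equation₁)
    (b := x₂ + x₃) ((PadicValGE.add (.inr h₂) (.inr h₃)).mono (by omega))
  rw [show x₁ + (x₂ + x₃) = L ^ 2 by linear_combination hS.vieta₁, padicValRat.pow] at hvL
  have hq2e := hS.rotate.padicValGE_quadratic hb h₂ h₃
  rw [← hK, PadicValGE.iff_of_ne_zero (mul_ne_zero hL hy), padicValRat.mul hL hy] at hq2e
  rw [SameComponent, sub_neg_eq_add, PadicValGE.iff_of_ne_zero hy]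
  have := hb.one_le
  push_cast at hvL
  omega

lemma singular_of_sameComponent (hb : BadPrimeData p D e)
    (hS : IsLineSection D L ν x₁ y₁ x₂ y₂ x₃ y₃) (h₁ : 1 ≤ v x₁) (h₂ : 1 ≤ v x₂)
    (hs : SameComponent p e y₁ y₂) : 1 ≤ v x₃ := by
  have := hb.one_le
  obtain ⟨hy, hvy⟩ := hb.add_of_sameComponent hS.equation₁ h₁ hs
  have hK := hS.slope_mul_add
  have hq := sq_add_mul_add_sq_pos x₂ (hb.x_ne_zero hS.equation₁)
  have hL : L ≠ 0 := by rintro rfl; linarith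
  have hq2e := hS.padicValGE_quadratic hb h₁ h₂
  rw [← hK, PadicValGE.iff_of_ne_zero (mul_ne_zero hL hy), padicValRat.mul hL hy, hvy] at hq2e
  have hvL : PadicValGE p e L := .inr (by omega)
  have hx₁ : PadicValGE p e x₁ := hb.padicValGE_of_singular hS.equation₁ h₁
  have hx₂ : PadicValGE p e x₂ := hb.padicValGE_of_singular hS.equation₂ h₂
  have hx₃ := ((hvL.mul hvL).mono (by omega) |>.sub hx₁).sub hx₂
  rw [show L * L - x₁ - x₂ = x₃ by linear_combination -hS.vieta₁,
    PadicValGE.iff_of_ne_zero (hb.x_ne_zero hS.equation₃)] at hx₃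
  omega

lemma sameComponent_of_singular (hb : BadPrimeData p D e)
    (hS : IsLineSection D L ν x₁ y₁ x₂ y₂ x₃ y₃) (h₁ : 1 ≤ v x₁) (h₂ : 1 ≤ v x₂)
    (h₃ : 1 ≤ v x₃) : SameComponent p e y₁ y₂ := by
  have hL : PadicValGE p 1 L := by
    by_cases hL : L = 0
    · exact .inl hL
    have := (PadicValGE.add (.inr h₁) (.inr h₂)).add (.inr h₃ : PadicValGE p 1 x₃)
    rw [hS.vieta₁, PadicValGE.iff_of_ne_zero (pow_ne_zero 2 hL), padicValRat.pow] at this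
    exact .inr (by push_cast at this; omega)
  have hx : PadicValGE p e (x₁ - x₂) :=
    PadicValGE.sub (hb.padicValGE_of_singular hS.equation₁ h₁)
      (hb.padicValGE_of_singular hS.equation₂ h₂)
  have := hL.mul hx
  rwa [add_comm, show L * (x₁ - x₂) = y₁ - y₂ by linear_combination hS.line₂ - hS.line₁] at this

lemma nonsingular_of_sameComponent_neg (hb : BadPrimeData p D e)
    (hS : IsLineSection D L ν x₁ y₁ x₂ y₂ x₃ y₃) (h₁ : 1 ≤ v x₁) (h₂ : 1 ≤ v x₂)
    (hs : SameComponent p e y₁ (-y₂)) : v x₃ ≤ 0 := by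
  by_contra! h₃
  obtain ⟨hy, hvy⟩ := hb.add_of_sameComponent hS.equation₁ h₁ hs
  have hsame := hS.sameComponent_of_singular hb h₁ h₂ h₃
  rw [← sub_eq_add_neg] at hy hvy
  rw [SameComponent, PadicValGE.iff_of_ne_zero hy] at hsame
  omega

lemma singular_of_nonsingular_singular (hb : BadPrimeData p D e)
    (hS : IsLineSection D L ν x₁ y₁ x₂ y₂ x₃ y₃) (h₁ : v x₁ ≤ 0) (h₂ : 1 ≤ v x₂) :
    1 ≤ v x₃ ∧ SameComponent p e y₂ (-y₃) := by
  have h₃ : 1 ≤ v x₃ := by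
    by_contra! h₃
    have := hS.swap.rotate.nonsingular_of_nonsingular hb h₁ (by omega)
    omega
  exact ⟨h₃, hS.sameComponent_neg_of_nonsingular hb h₁ h₂ h₃⟩

end IsLineSection

/-- As long as no multiple of `(x 1, y 1)` is the point at infinity, this says
`(x n, y n) = n • (x 1, y 1)` for `n ≥ 1`. -/
def IsMultiples (D : ℚ) (x y : ℕ → ℚ) : Prop :=
  ∀ n, 1 ≤ n → ∃ L ν, IsLineSection D L ν (x n) (y n) (x 1) (y 1) (x (n + 1)) (-y (n + 1))

namespace IsMultiples

variable {D : ℚ} {e : ℤ} {x y : ℕ → ℚ}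

lemma equation (hM : IsMultiples D x y) {n : ℕ} (hn : 1 ≤ n) : y n ^ 2 = x n ^ 3 - D := by
  obtain ⟨L, ν, hS⟩ := hM n hn
  exact hS.equation₁

lemma padicValRat_nonpos (hb : BadPrimeData p D e) (hM : IsMultiples D x y) (h₁ : v (x 1) ≤ 0)
    (n : ℕ) (hn : 1 ≤ n) : v (x n) ≤ 0 := by
  induction n, hn using Nat.le_induction with
  | base => exact h₁
  | succ n hn ih =>
    obtain ⟨L, ν, hS⟩ := hM n hn
    exact hS.nonsingular_of_nonsingular hb ih h₁

lemma mod_three_cycle (hb : BadPrimeData p D e) (hM : IsMultiples D x y) (h₁ : 1 ≤ v (x 1))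
    (n : ℕ) (hn : 1 ≤ n) :
    (n % 3 = 0 → v (x n) ≤ 0) ∧ (n % 3 = 1 → 1 ≤ v (x n) ∧ SameComponent p e (y n) (y 1)) ∧
      (n % 3 = 2 → 1 ≤ v (x n) ∧ SameComponent p e (y n) (-y 1)) := by
  induction n, hn using Nat.le_induction with
  | base => exact ⟨by omega, fun _ => ⟨h₁, by simp [SameComponent, PadicValGE]⟩, by omega⟩
  | succ n hn ih =>
    obtain ⟨L, ν, hS⟩ := hM n hn
    obtain ⟨ih₀, ih₁, ih₂⟩ := ih
    rcases (by omega : n % 3 = 0 ∨ n % 3 = 1 ∨ n % 3 = 2) with h | h | h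
    · obtain ⟨hx, hs⟩ := hS.singular_of_nonsingular_singular hb (ih₀ h) h₁
      rw [neg_neg] at hs
      exact ⟨by omega, fun _ => ⟨hx, hs.symm⟩, by omega⟩
    · obtain ⟨hxn, hs⟩ := ih₁ h
      have hx := hS.singular_of_sameComponent hb hxn h₁ hs
      have hs' := hS.rotate.sameComponent_of_singular hb h₁ hx hxn
      exact ⟨by omega, by omega, fun _ => ⟨hx, hs'.neg_comm⟩⟩
    · obtain ⟨hxn, hs⟩ := ih₂ h
      exact ⟨fun _ => hS.nonsingular_of_sameComponent_neg hb hxn h₁ hs, by omega, by omega⟩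

theorem one_le_padicValRat_iff (hb : BadPrimeData p D e) (hM : IsMultiples D x y) {n : ℕ}
    (hn : 1 ≤ n) : 1 ≤ v (x n) ↔ 1 ≤ v (x 1) ∧ ¬ 3 ∣ n := by
  rcases le_or_gt (v (x 1)) 0 with h₁ | h₁
  · have := hM.padicValRat_nonpos hb h₁ n hn
    omega
  · obtain ⟨h₀, h₁', h₂⟩ := hM.mod_three_cycle hb h₁ n hn
    rcases (by omega : n % 3 = 0 ∨ n % 3 = 1 ∨ n % 3 = 2) with h | h | h
    · have := h₀ h
      omega
    · have := (h₁' h).1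
      omega
    · have := (h₂ h).1
      omega

end IsMultiples

lemma padicValGE_intCast_iff (n : ℕ) (z : ℤ) : PadicValGE p n (z : ℚ) ↔ (p : ℤ) ^ n ∣ z := by
  rw [padicValInt_dvd_iff, PadicValGE, padicValRat.of_int, Int.cast_eq_zero, Nat.cast_le]

lemma padicValRat_two_pow_mul_three_pow (hp5 : 5 ≤ p) (a b : ℕ) :
    v (2 ^ a * 3 ^ b) = 0 := by
  have : Fact (Nat.Prime 3) := ⟨Nat.prime_three⟩
  have h2 : v 2 = 0 := by
    exact_mod_cast padicValNat_primes (p := p) (q := 2) (by omega)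
  have h3 : v 3 = 0 := by
    exact_mod_cast padicValNat_primes (p := p) (q := 3) (by omega)
  rw [padicValRat.mul (by positivity) (by positivity), padicValRat.pow, padicValRat.pow, h2, h3]
  simp

lemma badPrimeData_mordell {m : ℤ} (hm : m ≠ 0) (hcf : CubeFree m) (hp5 : 5 ≤ p)
    (hpm : (p : ℤ) ∣ m) : BadPrimeData p (432 * m ^ 2) (v m) := by
  have hm' : (m : ℚ) ≠ 0 := Int.cast_ne_zero.2 hm
  have hcube : ¬ (p : ℤ) ^ 3 ∣ m := fun h => by
    have := Int.isUnit_iff.1 (hcf _ h)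
    omega
  rw [← pow_one (p : ℤ), ← padicValGE_intCast_iff, PadicValGE.iff_of_ne_zero hm'] at hpm
  rw [← padicValGE_intCast_iff, PadicValGE.iff_of_ne_zero hm'] at hcube
  refine ⟨by positivity, ?_, by exact_mod_cast hpm, by push_cast at hcube; omega, ?_⟩
  · rw [padicValRat.mul (by norm_num) (pow_ne_zero 2 hm'), padicValRat.pow,
      show (432 : ℚ) = 2 ^ 4 * 3 ^ 3 by norm_num, padicValRat_two_pow_mul_three_pow hp5]
    push_cast
    ring
  · simpa using padicValRat_two_pow_mul_three_pow (p := p) hp5 1 0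

lemma dvd_iff_one_le_padicValRat_div_sq {a b : ℤ} (ha : a ≠ 0) (hb : b ≠ 0)
    (hab : Int.gcd a b = 1) : (p : ℤ) ∣ a ↔ 1 ≤ v (a / b ^ 2) := by
  have ha' : (a : ℚ) ≠ 0 := Int.cast_ne_zero.2 ha
  have hb' : (b : ℚ) ≠ 0 := Int.cast_ne_zero.2 hb
  rw [padicValRat.div ha' (pow_ne_zero 2 hb'), padicValRat.pow]
  have hva := padicValGE_intCast_iff (p := p) 1 a
  rw [pow_one, PadicValGE.iff_of_ne_zero ha'] at hva
  have hvb : 0 ≤ v b := by rw [padicValRat.of_int]; positivity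
  refine ⟨fun hpa => ?_, fun h => hva.1 (by omega)⟩
  have hpb : ¬ (p : ℤ) ∣ b := fun hpb => by
    have := Int.eq_one_of_dvd_one (by positivity) (hab ▸ Int.dvd_coe_gcd hpa hpb)
    exact (Fact.out : p.Prime).one_lt.ne' (by exact_mod_cast this)
  rw [padicValRat.of_int (z := b), padicValInt.eq_zero_of_not_dvd hpb]
  have := hva.2 hpa
  push_cast
  omega

section MordellCurve

variable {m : ℤ} {x₁ y₁ x₂ y₂ : ℚ}

lemma isLineSection_mordell_slope (h₁ : (Mordell m).Equation x₁ y₁)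
    (h₂ : (Mordell m).Equation x₂ y₂) (hxy : ¬(x₁ = x₂ ∧ y₁ = (Mordell m).negY x₂ y₂)) :
    let L := (Mordell m).slope x₁ x₂ y₁ y₂
    IsLineSection (432 * m ^ 2) L (y₁ - L * x₁) x₁ y₁ x₂ y₂
      ((Mordell m).addX x₁ x₂ L) ((Mordell m).negAddY x₁ x₂ y₁ L) := by
  intro L
  have hline : y₂ = L * x₂ + (y₁ - L * x₁) := by
    by_cases hx : x₁ = x₂
    · rw [← Affine.Y_eq_of_Y_ne h₁ h₂ hx fun hy => hxy ⟨hx, hy⟩, hx]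
      ring
    · rw [show L = (y₁ - y₂) / (x₁ - x₂) from Affine.slope_of_X_ne hx]
      field_simp [sub_ne_zero.2 hx]
      ring
  have h := Affine.addPolynomial_slope h₁ h₂ hxy
  rw [Affine.addPolynomial_eq, neg_inj, Cubic.prod_X_sub_C_eq,
    Cubic.toPoly_injective, Cubic.ext_iff] at h
  obtain ⟨-, -, hc, hd⟩ := h
  refine ⟨by ring, hline, by simp [L]; ring, fun x => ?_⟩
  have ha₁ : (Mordell m).a₁ = 0 := rfl
  have ha₂ : (Mordell m).a₂ = 0 := rfl
  have ha₃ : (Mordell m).a₃ = 0 := rfl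
  have ha₄ : (Mordell m).a₄ = 0 := rfl
  have ha₆ : (Mordell m).a₆ = -432 * m ^ 2 := rfl
  simp only [ha₁, ha₂, ha₃, ha₄, ha₆, Affine.addX] at hc hd ⊢
  linear_combination x * hc + hd

lemma isMultiples_of_nsmul {Q : (Mordell m).Point} (hQ : ∀ k : ℕ, 0 < k → k • Q ≠ 0)
    {X Y : ℕ → ℚ}
    (hXY : ∀ n : ℕ, 1 ≤ n → ∃ h : (Mordell m).Nonsingular (X n) (Y n), n • Q = .some _ _ h) :
    IsMultiples (432 * m ^ 2) X Y := by
  intro n hn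
  obtain ⟨h₁, hQ₁⟩ := hXY 1 le_rfl
  obtain ⟨hₙ, hQn⟩ := hXY n hn
  obtain ⟨_, hQn'⟩ := hXY (n + 1) (by omega)
  rw [one_nsmul] at hQ₁
  have hxy : ¬(X n = X 1 ∧ Y n = (Mordell m).negY (X 1) (Y 1)) := fun ⟨hx, hy⟩ =>
    hQ (n + 1) n.succ_pos (by rw [succ_nsmul, hQn, hQ₁]; exact Affine.Point.add_of_Y_eq hx hy)
  have hadd := succ_nsmul Q n
  rw [hQn', hQn, hQ₁, Affine.Point.add_some hxy] at hadd
  injection hadd with hx hy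
  have hy' : -Y (n + 1) =
      (Mordell m).negAddY (X n) (X 1) (Y n) ((Mordell m).slope (X n) (X 1) (Y n) (Y 1)) := by
    rw [hy]
    simp [Affine.addY, Affine.negY, Mordell]
  rw [hx, hy']
  exact ⟨_, _, isLineSection_mordell_slope hₙ.1 h₁.1 hxy⟩

end MordellCurve

end

theorem bad_prime_divides_An_iff_general
    (m : ℤ) (hm : m ≠ 0) (hcf : CubeFree m)
    (Q : (Mordell m).Point) (hQ : ∀ k : ℕ, 0 < k → k • Q ≠ 0)
    (A B C : ℕ → ℤ)
    (hB : ∀ n : ℕ, 1 ≤ n → 1 ≤ B n)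
    (hAB : ∀ n : ℕ, 1 ≤ n → Int.gcd (A n) (B n) = 1)
    (hABC : ∀ n : ℕ, 1 ≤ n →
      ∃ h : (Mordell m).Nonsingular ((A n : ℚ) / (B n : ℚ) ^ 2) ((C n : ℚ) / (B n : ℚ) ^ 3),
        n • Q = WeierstrassCurve.Affine.Point.some _ _ h)
    (p : ℕ) (hp : p.Prime) (hp5 : 5 ≤ p) (hpm : (p : ℤ) ∣ m) :
    ∀ n : ℕ, 1 ≤ n → ((p : ℤ) ∣ A n ↔ ((p : ℤ) ∣ A 1 ∧ ¬ 3 ∣ n)) := by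
  have : Fact p.Prime := ⟨hp⟩
  have hb := badPrimeData_mordell hm hcf hp5 hpm
  have hM := isMultiples_of_nsmul hQ hABC
  have hdvd (n : ℕ) (hn : 1 ≤ n) : (p : ℤ) ∣ A n ↔ 1 ≤ padicValRat p (A n / B n ^ 2) := by
    have hA : A n ≠ 0 := fun h => hb.x_ne_zero (hM.equation hn) (by simp [h])
    exact dvd_iff_one_le_padicValRat_div_sq hA (by linarith [hB n hn]) (hAB n hn)
  intro n hn
  rw [hdvd n hn, hdvd 1 le_rfl]
  exact hM.one_le_padicValRat_iff hb hn

theorem bad_prime_divides_An_iff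
    (m : ℤ) (hm : m ≠ 0) (hcf : CubeFree m)
    (Q : (Mordell m).Point) (hQ : ∀ k : ℕ, 0 < k → k • Q ≠ 0)
    (A B C : ℕ → ℤ)
    (hB : ∀ n : ℕ, 1 ≤ n → 1 ≤ B n)
    (hAB : ∀ n : ℕ, 1 ≤ n → Int.gcd (A n) (B n) = 1)
    (hCB : ∀ n : ℕ, 1 ≤ n → Int.gcd (C n) (B n) = 1)
    (hABC : ∀ n : ℕ, 1 ≤ n →
      ∃ h : (Mordell m).Nonsingular ((A n : ℚ) / (B n : ℚ) ^ 2) ((C n : ℚ) / (B n : ℚ) ^ 3),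
        n • Q = WeierstrassCurve.Affine.Point.some _ _ h)
    (p : ℕ) (hp : p.Prime) (hp5 : 5 ≤ p) (hpm : (p : ℤ) ∣ m) :
    ∀ n : ℕ, 1 ≤ n → ((p : ℤ) ∣ A n ↔ ((p : ℤ) ∣ A 1 ∧ ¬ 3 ∣ n)) :=
  bad_prime_divides_An_iff_general m hm hcf Q hQ A B C hB hAB hABC p hp hp5 hpm
end

section
/- Let m be a nonzero cube-free integer, let Q be a point of infinite order on E: y^2 = x^3 - 432m^2 with Q = (A_1/B_1^2, C_1/B_1^3) in lowest terms, set D = -432m^2, g = gcd(A_1^3, 4D) > 0, s = A_1^3/g and t = 4D·B_1^6/g. Then: (i) for every prime p ≥ 5 dividing both A_1 and D, one has ord_p(s) > 0 = ord_p(t); and (ii) for every prime p ≥ 5, ord_p(t) is even. -/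
open WeierstrassCurve

/-!
For a prime `p ≥ 5` we have `vₚ(4D) = vₚ(D) = 2 vₚ(m)`, because `4D = -1728 m² = -2⁶ 3³ m²`.
Hence `vₚ(g) = min (3 vₚ(A₁)) (2 vₚ(m))`, `vₚ(s) = 3 vₚ(A₁) - vₚ(g)` and
`vₚ(t) = 2 vₚ(m) + 6 vₚ(B₁) - vₚ(g)`. The crux is that `vₚ(g)` is even: if `p ∣ B₁` then `p ∤ A₁`
and `vₚ(g) = 0`; otherwise `vₚ(D B₁⁶) = 2 vₚ(m)`, and if `3 vₚ(A₁) < 2 vₚ(m)` the ultrametric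
inequality applied to `C₁² = A₁³ + D B₁⁶` gives `3 vₚ(A₁) = vₚ(C₁²)`. This gives (ii) at once.
For (i), `p ∣ m`, so `vₚ(m) ∈ {1, 2}` by cube-freeness, and `p ∤ B₁`; evenness of `vₚ(g)` rules
out `vₚ(A₁) = 1, vₚ(m) = 2`, so `vₚ(g) = 2 vₚ(m) < 3 vₚ(A₁)`, whence `vₚ(s) > 0 = vₚ(t)`.
-/

namespace padicValInt

variable {p : ℕ} [Fact p.Prime]

protected theorem pow (a : ℤ) (n : ℕ) : padicValInt p (a ^ n) = n * padicValInt p a := by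
  simp [padicValInt, Int.natAbs_pow]

protected theorem ediv_of_dvd {a b : ℤ} (h : b ∣ a) :
    padicValInt p (a / b) = padicValInt p a - padicValInt p b := by
  rw [padicValInt, Int.natAbs_ediv_of_dvd h]
  exact padicValNat.div_of_dvd (Int.natAbs_dvd_natAbs.mpr h)

protected theorem gcd {a b : ℤ} (ha : a ≠ 0) (hb : b ≠ 0) :
    padicValInt p (Int.gcd a b) = min (padicValInt p a) (padicValInt p b) := by
  have hp : p.Prime := Fact.out
  rw [padicValInt.of_nat, padicValInt, padicValInt, ← Nat.factorization_def _ hp,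
    ← Nat.factorization_def _ hp, ← Nat.factorization_def _ hp, Int.gcd,
    Nat.factorization_gcd (Int.natAbs_ne_zero.2 ha) (Int.natAbs_ne_zero.2 hb)]
  rfl

theorem mul_eq_right_of_not_dvd {c a : ℤ} (hc : ¬ (p : ℤ) ∣ c) (ha : a ≠ 0) :
    padicValInt p (c * a) = padicValInt p a := by
  rw [padicValInt.mul (by rintro rfl; exact hc (dvd_zero _)) ha, eq_zero_of_not_dvd hc, zero_add]

theorem one_le_iff_dvd {a : ℤ} (ha : a ≠ 0) : 1 ≤ padicValInt p a ↔ (p : ℤ) ∣ a := by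
  rw [← pow_one (p : ℤ), padicValInt_dvd_iff, or_iff_right ha]

theorem add_eq_left_of_lt {a b : ℤ} (ha : a ≠ 0) (hb : b ≠ 0)
    (h : padicValInt p a < padicValInt p b) : padicValInt p (a + b) = padicValInt p a := by
  have hab : a + b ≠ 0 := by
    intro hab
    rw [eq_neg_of_add_eq_zero_right hab] at h
    simp [padicValInt] at h
  have := padicValRat.add_eq_of_lt (p := p) (q := a) (r := b) (mod_cast hab) (mod_cast ha)
    (mod_cast hb) (by simpa only [padicValRat.of_int, Nat.cast_lt] using h)
  rw [← Int.cast_add, padicValRat.of_int, padicValRat.of_int] at this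
  exact_mod_cast this

theorem even_of_sq_eq_add_of_lt {a b c : ℤ} (h : c ^ 2 = a + b) (ha : a ≠ 0) (hb : b ≠ 0)
    (hlt : padicValInt p a < padicValInt p b) : Even (padicValInt p a) := by
  rw [← add_eq_left_of_lt ha hb hlt, ← h, padicValInt.pow]
  exact even_two_mul _

end padicValInt

theorem CubeFree.padicValInt_le_two {m : ℤ} (hm : CubeFree m) (p : ℕ) [hp : Fact p.Prime] :
    padicValInt p m ≤ 2 := by
  by_contra! h
  exact (Nat.prime_iff_prime_int.mp hp.out).not_isUnit
    (hm _ ((padicValInt_dvd_iff 3 m).mpr (Or.inr h)))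

theorem Nat.Prime.not_dvd_1728 {p : ℕ} (hp : p.Prime) (hp5 : 5 ≤ p) : ¬ (p : ℤ) ∣ 1728 := by
  intro h
  have h' : p ∣ 2 ^ 6 * 3 ^ 3 := by exact_mod_cast h
  rcases hp.dvd_mul.mp h' with h2 | h3
  · have := Nat.le_of_dvd two_pos (hp.dvd_of_dvd_pow h2); omega
  · have := Nat.le_of_dvd three_pos (hp.dvd_of_dvd_pow h3); omega

theorem Mordell.sq_eq_cube_add_of_equation {m A B C : ℤ} (hB : B ≠ 0)
    (h : (Mordell m).Equation ((A : ℚ) / B ^ 2) ((C : ℚ) / B ^ 3)) :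
    C ^ 2 = A ^ 3 + -432 * m ^ 2 * B ^ 6 := by
  rw [Affine.equation_iff] at h
  simp only [Mordell] at h
  have hB' : (B : ℚ) ≠ 0 := by exact_mod_cast hB
  have h' : (C : ℚ) ^ 2 = A ^ 3 + -432 * m ^ 2 * B ^ 6 := by
    field_simp at h
    linear_combination h
  exact_mod_cast h'

theorem Mordell.ne_zero_of_sq_eq_cube_add {m A B C : ℤ} (hm : m ≠ 0) (hB : B ≠ 0)
    (heq : C ^ 2 = A ^ 3 + -432 * m ^ 2 * B ^ 6) : A ≠ 0 := by
  rintro rfl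
  have : 0 < m ^ 2 * B ^ 6 := by positivity
  nlinarith [sq_nonneg C]

section MordellValuations

variable {m A B C : ℤ} {p : ℕ} [hp : Fact p.Prime]

theorem padicValInt_mul_sq_of_dvd_1728 (hp5 : 5 ≤ p) {c : ℤ} (hc : c ∣ 1728) (hm : m ≠ 0) :
    padicValInt p (c * m ^ 2) = 2 * padicValInt p m := by
  rw [padicValInt.mul_eq_right_of_not_dvd (fun h ↦ hp.out.not_dvd_1728 hp5 (h.trans hc))
    (pow_ne_zero 2 hm), padicValInt.pow]

theorem padicValInt_four_mul_mordell (hp5 : 5 ≤ p) (hm : m ≠ 0) :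
    padicValInt p (4 * (-432 * m ^ 2)) = 2 * padicValInt p m := by
  rw [show 4 * (-432 * m ^ 2) = -1728 * m ^ 2 by ring]
  exact padicValInt_mul_sq_of_dvd_1728 hp5 (by norm_num) hm

theorem padicValInt_gcd_cube_mordell (hp5 : 5 ≤ p) (hm : m ≠ 0) (hA : A ≠ 0) :
    padicValInt p (Int.gcd (A ^ 3) (4 * (-432 * m ^ 2))) =
      min (3 * padicValInt p A) (2 * padicValInt p m) := by
  rw [padicValInt.gcd (pow_ne_zero 3 hA) (by positivity), padicValInt.pow,
    padicValInt_four_mul_mordell hp5 hm]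

theorem even_padicValInt_gcd_cube_mordell (hp5 : 5 ≤ p) (hm : m ≠ 0)
    (heq : C ^ 2 = A ^ 3 + -432 * m ^ 2 * B ^ 6) (hAB : IsCoprime A B) (hB : B ≠ 0) :
    Even (padicValInt p (Int.gcd (A ^ 3) (4 * (-432 * m ^ 2)))) := by
  have hA := Mordell.ne_zero_of_sq_eq_cube_add hm hB heq
  rw [padicValInt_gcd_cube_mordell hp5 hm hA]
  by_cases hpB : (p : ℤ) ∣ B
  · have hpA : ¬ (p : ℤ) ∣ A := fun hpA ↦
      (Nat.prime_iff_prime_int.mp hp.out).not_isUnit (hAB.isUnit_of_dvd' hpA hpB)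
    simp [padicValInt.eq_zero_of_not_dvd hpA]
  rcases le_or_gt (2 * padicValInt p m) (3 * padicValInt p A) with hle | hlt
  · rw [min_eq_right hle]
    exact even_two_mul _
  rw [min_eq_left hlt.le, ← padicValInt.pow]
  have hD : -432 * m ^ 2 ≠ 0 := by positivity
  refine padicValInt.even_of_sq_eq_add_of_lt heq (pow_ne_zero 3 hA)
    (mul_ne_zero hD (pow_ne_zero 6 hB)) ?_
  rwa [padicValInt.mul hD (pow_ne_zero 6 hB), padicValInt.pow, padicValInt.pow,
    padicValInt.eq_zero_of_not_dvd hpB, padicValInt_mul_sq_of_dvd_1728 hp5 (by norm_num) hm]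

theorem padicValInt_mordell_mul_ediv_gcd (hp5 : 5 ≤ p) (hm : m ≠ 0) (hB : B ≠ 0) :
    padicValInt p (4 * (-432 * m ^ 2) * B ^ 6 / Int.gcd (A ^ 3) (4 * (-432 * m ^ 2))) =
      2 * padicValInt p m + 6 * padicValInt p B -
        padicValInt p (Int.gcd (A ^ 3) (4 * (-432 * m ^ 2))) := by
  rw [padicValInt.ediv_of_dvd ((Int.gcd_dvd_right _ _).mul_right _),
    padicValInt.mul (by positivity) (pow_ne_zero 6 hB), padicValInt_four_mul_mordell hp5 hm,
    padicValInt.pow]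

theorem even_padicValInt_mordell_mul_ediv_gcd (hp5 : 5 ≤ p) (hm : m ≠ 0)
    (heq : C ^ 2 = A ^ 3 + -432 * m ^ 2 * B ^ 6) (hAB : IsCoprime A B) (hB : B ≠ 0) :
    Even (padicValInt p (4 * (-432 * m ^ 2) * B ^ 6 / Int.gcd (A ^ 3) (4 * (-432 * m ^ 2)))) := by
  have hA := Mordell.ne_zero_of_sq_eq_cube_add hm hB heq
  obtain ⟨k, hk⟩ := even_padicValInt_gcd_cube_mordell hp5 hm heq hAB hB
  have hvg := padicValInt_gcd_cube_mordell (p := p) hp5 hm hA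
  rw [padicValInt_mordell_mul_ediv_gcd hp5 hm hB]
  exact ⟨padicValInt p m + 3 * padicValInt p B - k, by omega⟩

theorem two_mul_padicValInt_lt_of_dvd (hp5 : 5 ≤ p) (hcf : CubeFree m) (hm : m ≠ 0)
    (heq : C ^ 2 = A ^ 3 + -432 * m ^ 2 * B ^ 6) (hAB : IsCoprime A B) (hB : B ≠ 0)
    (hpA : (p : ℤ) ∣ A) (hpm : (p : ℤ) ∣ m) :
    2 * padicValInt p m < 3 * padicValInt p A := by
  have hA := Mordell.ne_zero_of_sq_eq_cube_add hm hB heq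
  have hvA := (padicValInt.one_le_iff_dvd hA).mpr hpA
  have hvm := (padicValInt.one_le_iff_dvd hm).mpr hpm
  have hvm2 := hcf.padicValInt_le_two p
  obtain ⟨k, hk⟩ := even_padicValInt_gcd_cube_mordell hp5 hm heq hAB hB
  rw [padicValInt_gcd_cube_mordell hp5 hm hA] at hk
  omega

theorem dvd_cube_ediv_gcd_and_not_dvd_mordell_mul_ediv_gcd (hp5 : 5 ≤ p) (hcf : CubeFree m)
    (hm : m ≠ 0) (heq : C ^ 2 = A ^ 3 + -432 * m ^ 2 * B ^ 6) (hAB : IsCoprime A B) (hB : B ≠ 0)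
    (hpA : (p : ℤ) ∣ A) (hpD : (p : ℤ) ∣ -432 * m ^ 2) :
    (p : ℤ) ∣ A ^ 3 / Int.gcd (A ^ 3) (4 * (-432 * m ^ 2)) ∧
      ¬ (p : ℤ) ∣ 4 * (-432 * m ^ 2) * B ^ 6 / Int.gcd (A ^ 3) (4 * (-432 * m ^ 2)) := by
  have hA := Mordell.ne_zero_of_sq_eq_cube_add hm hB heq
  have hpZ := Nat.prime_iff_prime_int.mp hp.out
  have hpm : (p : ℤ) ∣ m :=
    hpZ.dvd_of_dvd_pow ((hpZ.dvd_mul.mp hpD).resolve_left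
      fun h ↦ hp.out.not_dvd_1728 hp5 (h.trans (by norm_num)))
  have hpB : ¬ (p : ℤ) ∣ B := fun hpB ↦ hpZ.not_isUnit (hAB.isUnit_of_dvd' hpA hpB)
  have hlt := two_mul_padicValInt_lt_of_dvd hp5 hcf hm heq hAB hB hpA hpm
  have hvg := padicValInt_gcd_cube_mordell (p := p) hp5 hm hA
  have hs0 : A ^ 3 / Int.gcd (A ^ 3) (4 * (-432 * m ^ 2)) ≠ 0 := fun h ↦
    pow_ne_zero 3 hA (Int.eq_zero_of_ediv_eq_zero (Int.gcd_dvd_left _ _) h)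
  have ht0 : 4 * (-432 * m ^ 2) * B ^ 6 / Int.gcd (A ^ 3) (4 * (-432 * m ^ 2)) ≠ 0 := fun h ↦
    mul_ne_zero (by positivity) (pow_ne_zero 6 hB)
      (Int.eq_zero_of_ediv_eq_zero ((Int.gcd_dvd_right _ _).mul_right _) h)
  rw [← padicValInt.one_le_iff_dvd hs0, ← padicValInt.one_le_iff_dvd ht0,
    padicValInt.ediv_of_dvd (Int.gcd_dvd_left _ _), padicValInt.pow,
    padicValInt_mordell_mul_ediv_gcd hp5 hm hB, padicValInt.eq_zero_of_not_dvd hpB]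
  omega

end MordellValuations

theorem gcd_claim_s_t_general
    (m : ℤ) (hm : m ≠ 0) (hcf : CubeFree m)
    (Q : (Mordell m).Point)
    (A B C : ℕ → ℤ)
    (hB : ∀ n : ℕ, 1 ≤ n → 1 ≤ B n)
    (hAB : ∀ n : ℕ, 1 ≤ n → Int.gcd (A n) (B n) = 1)
    (hABC : ∀ n : ℕ, 1 ≤ n →
      ∃ h : (Mordell m).Nonsingular ((A n : ℚ) / (B n : ℚ) ^ 2) ((C n : ℚ) / (B n : ℚ) ^ 3),
        n • Q = WeierstrassCurve.Affine.Point.some _ _ h)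
    (g s t : ℤ)
    (hg : g = Int.gcd (A 1 ^ 3) (4 * (-432 * m ^ 2)))
    (hs : s = A 1 ^ 3 / g)
    (ht : t = 4 * (-432 * m ^ 2) * B 1 ^ 6 / g) :
    0 < g ∧
      (∀ p : ℕ, p.Prime → 5 ≤ p → (p : ℤ) ∣ A 1 → (p : ℤ) ∣ (-432 * m ^ 2) →
        (p : ℤ) ∣ s ∧ ¬ (p : ℤ) ∣ t) ∧
      (∀ p : ℕ, p.Prime → 5 ≤ p → Even (padicValInt p t)) := by
  obtain ⟨hns, -⟩ := hABC 1 le_rfl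
  have hB0 : B 1 ≠ 0 := by have := hB 1 le_rfl; omega
  have heq := Mordell.sq_eq_cube_add_of_equation hB0 hns.1
  have hcop := Int.isCoprime_iff_gcd_eq_one.mpr (hAB 1 le_rfl)
  subst hg hs ht
  refine ⟨Int.natCast_pos.2 (Int.gcd_pos_of_ne_zero_right _ (by positivity)),
    fun p hp hp5 hpA hpD ↦ ?_, fun p hp hp5 ↦ ?_⟩ <;> have := Fact.mk hp
  · exact dvd_cube_ediv_gcd_and_not_dvd_mordell_mul_ediv_gcd hp5 hcf hm heq hcop hB0 hpA hpD
  · exact even_padicValInt_mordell_mul_ediv_gcd hp5 hm heq hcop hB0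

theorem gcd_claim_s_t
    (m : ℤ) (hm : m ≠ 0) (hcf : CubeFree m)
    (Q : (Mordell m).Point) (hQ : ∀ k : ℕ, 0 < k → k • Q ≠ 0)
    (A B C : ℕ → ℤ)
    (hB : ∀ n : ℕ, 1 ≤ n → 1 ≤ B n)
    (hAB : ∀ n : ℕ, 1 ≤ n → Int.gcd (A n) (B n) = 1)
    (hCB : ∀ n : ℕ, 1 ≤ n → Int.gcd (C n) (B n) = 1)
    (hABC : ∀ n : ℕ, 1 ≤ n →
      ∃ h : (Mordell m).Nonsingular ((A n : ℚ) / (B n : ℚ) ^ 2) ((C n : ℚ) / (B n : ℚ) ^ 3),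
        n • Q = WeierstrassCurve.Affine.Point.some _ _ h)
    (g s t : ℤ)
    (hg : g = Int.gcd (A 1 ^ 3) (4 * (-432 * m ^ 2)))
    (hs : s = A 1 ^ 3 / g)
    (ht : t = 4 * (-432 * m ^ 2) * B 1 ^ 6 / g) :
    0 < g ∧
      (∀ p : ℕ, p.Prime → 5 ≤ p → (p : ℤ) ∣ A 1 → (p : ℤ) ∣ (-432 * m ^ 2) →
        (p : ℤ) ∣ s ∧ ¬ (p : ℤ) ∣ t) ∧
      (∀ p : ℕ, p.Prime → 5 ≤ p → Even (padicValInt p t)) :=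
  gcd_claim_s_t_general m hm hcf Q A B C hB hAB hABC g s t hg hs ht
end

section
/- Let a, b, c be integers with a = b + c, a ≠ 0, c < 0, such that b and c are {2,3}-units (nonzero integers with no prime factor other than 2 and 3), gcd(b, c) = 1, and at least one of a, 2a, 3a, 6a is a perfect square. Then (a, b, c) is one of the following ten triples: (1, 2, -1), (1, 4, -3), (1, 3, -2), (1, 9, -8), (25, 27, -2), (49, 81, -32), (2, 3, -1), (8, 9, -1), (242, 243, -1), (3, 4, -1). -/
/-!
Write `a = d * Y ^ 2` with `d ∣ 6`. Coprimality of `b` and `c` makes `|c| = 1`, or one of `b`, `|c|`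
a power of `2` and the other a power of `3`; a prime dividing `d` divides neither. What is left are
the equations `Y² + 1 = 2^m 3^n`, `3Y² + 1 = 2^m`, `Y² + 3^v = 2^m`, `Y² + 2^u = 3^n` and
`2Y² + 1 = 3^n`. Congruences and the factorisation of a difference of squares into prime powers
settle all of them except `Y² + 2 = 3^n` and `2Y² + 1 = 3^n`. A primitive solution of
`x² + 2z² = 3^n` is, up to signs, `x + z√-2 = θ^n` with `θ = 1 + √-2`, so these two say that a
coordinate of `θ^n` is `±1`. Since `θ^8 ≡ 1 (mod 8)` and every squaring gains exactly one factor
of `2`, `θ^n` is `θ^(n % 8)` times an element `1 + 2^k γ` with `k ≥ 3` and `γ` of known shape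
modulo `8`, and the coordinates of `θ^(n % 8)` then show that `n < 8`.
-/

/-- A `{2,3}`-unit: a nonzero integer whose only prime divisors are `2` and `3`. -/
def TwoThreeUnit (z : ℤ) : Prop :=
  z ≠ 0 ∧ ∀ p : ℕ, p.Prime → (p : ℤ) ∣ z → p = 2 ∨ p = 3

lemma TwoThreeUnit.exists_natAbs_eq {z : ℤ} (hz : TwoThreeUnit z) :
    ∃ m n : ℕ, z.natAbs = 2 ^ m * 3 ^ n := by
  obtain ⟨hz0, hp⟩ := hz
  have hsupp : z.natAbs.factorization.support ⊆ {2, 3} := fun p hp' ↦ by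
    rw [Nat.support_factorization] at hp'
    simpa using hp p (Nat.prime_of_mem_primeFactors hp')
      (Int.natCast_dvd.2 (Nat.dvd_of_mem_primeFactors hp'))
  refine ⟨z.natAbs.factorization 2, z.natAbs.factorization 3, ?_⟩
  conv_lhs => rw [← Nat.prod_factorization_pow_eq_self (Int.natAbs_ne_zero.2 hz0)]
  rw [Finsupp.prod_of_support_subset _ hsupp _ (by simp)]
  simp

lemma exists_eq_mul_sq_of_mul_eq_sq {d : ℕ} (hd : Squarefree d) {a x : ℤ}
    (h : d * a = x ^ 2) : ∃ Y : ℕ, a = (d * Y ^ 2 : ℕ) := by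
  obtain ⟨w, rfl⟩ := ((Int.squarefree_natCast.2 hd).dvd_pow_iff_dvd two_ne_zero).1 ⟨a, h.symm⟩
  refine ⟨w.natAbs, mul_left_cancel₀ (?_ : (d : ℤ) ≠ 0) ?_⟩
  · exact_mod_cast hd.ne_zero
  · push_cast
    rw [h, sq_abs]
    ring

def θ : ℤ√(-2) := ⟨1, 1⟩

lemma θ_pow_succ_re (k : ℕ) : (θ ^ (k + 1)).re = (θ ^ k).re - 2 * (θ ^ k).im := by
  simp [pow_succ, θ]
  ring

lemma θ_pow_succ_im (k : ℕ) : (θ ^ (k + 1)).im = (θ ^ k).re + (θ ^ k).im := by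
  simp [pow_succ, θ]

lemma three_dvd_re_sub_im_θ_pow {k : ℕ} (hk : k ≠ 0) : 3 ∣ (θ ^ k).re - (θ ^ k).im := by
  obtain ⟨j, rfl⟩ := Nat.exists_eq_succ_of_ne_zero hk
  rw [θ_pow_succ_re, θ_pow_succ_im]
  exact ⟨-(θ ^ j).im, by ring⟩

lemma exists_sq_add_two_mul_sq_eq_three_pow {x z : ℤ} {k : ℕ}
    (h : x ^ 2 + 2 * z ^ 2 = 3 ^ (k + 1)) (h3 : 3 ∣ x - z) :
    ∃ X Z : ℤ, x = X - 2 * Z ∧ z = X + Z ∧ X ^ 2 + 2 * Z ^ 2 = 3 ^ k := by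
  obtain ⟨w, hw⟩ := h3
  refine ⟨z + w, -w, by linarith, by ring, ?_⟩
  have : 3 * ((z + w) ^ 2 + 2 * (-w) ^ 2) = 3 * 3 ^ k := by
    rw [← pow_succ', ← h, show x = z + 3 * w by linarith]
    ring
  linarith

/-- The descent divides `x + z√-2` by `θ` (or, after `z ↦ -z`, by its conjugate). -/
lemma natAbs_eq_θ_pow (k : ℕ) {x z : ℤ} (h : x ^ 2 + 2 * z ^ 2 = 3 ^ k) (hxz : IsCoprime x z) :
    x.natAbs = (θ ^ k).re.natAbs ∧ z.natAbs = (θ ^ k).im.natAbs := by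
  induction k generalizing x z with
  | zero =>
    obtain rfl : z = 0 := by nlinarith
    have : (x - 1) * (x + 1) = 0 := by linear_combination h
    simp
    rcases mul_eq_zero.1 this with h | h <;> omega
  | succ k ih =>
    wlog h3 : 3 ∣ x - z generalizing z
    · have h3' : 3 ∣ x - -z := by
        have : (3 : ℤ) ∣ (x - z) * (x + z) := ⟨3 ^ k - z ^ 2, by linear_combination h⟩
        simpa [h3] using Int.prime_three.dvd_mul.1 this
      simpa using this (by simpa using h) hxz.neg_right h3'
    obtain ⟨X, Z, rfl, rfl, hXZ⟩ := exists_sq_add_two_mul_sq_eq_three_pow h h3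
    have hXZ' : IsCoprime X Z := by
      obtain ⟨u, v, huv⟩ := hxz
      exact ⟨u + v, v - 2 * u, by linear_combination huv⟩
    have hnot : ¬ ((3 : ℤ) ∣ X - 2 * Z ∧ (3 : ℤ) ∣ X + Z) := fun ⟨h1, h2⟩ ↦ by
      have := Int.isUnit_iff.1 (hxz.isUnit_of_dvd' h1 h2)
      omega
    obtain ⟨hX, hZ⟩ := ih hXZ hXZ'
    rw [θ_pow_succ_re, θ_pow_succ_im]
    rcases Nat.eq_zero_or_pos k with rfl | hk
    · simp only [pow_zero, Zsqrtd.re_one, Zsqrtd.im_one] at hX hZ ⊢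
      omega
    · have := three_dvd_re_sub_im_θ_pow hk.ne'
      omega

/-- `α = 1 + 2^k γ` with `γ ≡ Q (-2 + √-2) (mod 8)` and `Q` odd. The element `θ ^ 8 = 17 + 56√-2`
is of this form for `k = 3` (with `Q = 7`, `ρ = 2`), and squaring passes from `k` to `k + 1`. -/
def NearOne (k : ℕ) (α : ℤ√(-2)) : Prop :=
  ∃ (Q : ℤ) (ρ : ℤ√(-2)), Odd Q ∧ α = 1 + ((2 ^ k : ℤ) : ℤ√(-2)) * (Q * ⟨-2, 1⟩ + 8 * ρ)

namespace NearOne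

variable {k : ℕ} {α : ℤ√(-2)}

lemma mul {β : ℤ√(-2)} (hk : 2 ≤ k) (hα : NearOne k α) (hβ : NearOne (k + 1) β) :
    NearOne k (α * β) := by
  obtain ⟨Q, ρ, hQ, rfl⟩ := hα
  obtain ⟨Q', ρ', -, rfl⟩ := hβ
  obtain ⟨j, rfl⟩ := Nat.exists_eq_add_of_le' hk
  refine ⟨Q + 2 * Q', ρ + 2 * ρ' + 2 ^ j * (Q * ⟨-2, 1⟩ + 8 * ρ) * (Q' * ⟨-2, 1⟩ + 8 * ρ'),
    hQ.add_even (even_two_mul Q'), ?_⟩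
  push_cast
  ring

lemma sq (hk : 3 ≤ k) (hα : NearOne k α) : NearOne (k + 1) (α ^ 2) := by
  obtain ⟨Q, ρ, hQ, rfl⟩ := hα
  obtain ⟨j, rfl⟩ := Nat.exists_eq_add_of_le' hk
  have hη : (⟨-2, 1⟩ * ⟨-2, 1⟩ : ℤ√(-2)) = 2 * ⟨1, -2⟩ := by decide
  refine ⟨Q, ρ + 2 ^ j * Q ^ 2 * ⟨1, -2⟩ + 2 ^ (j + 3) * (Q * ⟨-2, 1⟩ * ρ + 4 * ρ ^ 2), hQ, ?_⟩
  push_cast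
  linear_combination (2 ^ (2 * (j + 3)) * (Q : ℤ√(-2)) ^ 2) * hη

lemma pow_of_odd {s : ℕ} (hk : 3 ≤ k) (hα : NearOne k α) (hs : Odd s) : NearOne k (α ^ s) := by
  obtain ⟨j, rfl⟩ := hs
  induction j with
  | zero => simpa using hα
  | succ j ih =>
    rw [show 2 * (j + 1) + 1 = (2 * j + 1) + 2 by ring, pow_add]
    exact ih.mul (by omega) (hα.sq hk)

lemma re_mul (hk : 3 ≤ k) (hα : NearOne k α) (β : ℤ√(-2)) :
    16 ∣ (α * β).re - β.re ∧ ((α * β).re = β.re → 4 ∣ β.re + β.im) := by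
  obtain ⟨Q, ρ, hQ, rfl⟩ := hα
  obtain ⟨j, rfl⟩ := Nat.exists_eq_add_of_le' hk
  generalize hc : (2 ^ (j + 3) : ℤ) = c
  have hre : ((1 + (c : ℤ√(-2)) * (Q * ⟨-2, 1⟩ + 8 * ρ)) * β).re - β.re
      = c * 2 * (4 * (ρ * β).re - Q * (β.re + β.im)) := by
    simp [add_mul, mul_add]
    ring
  have hc0 : c * 2 ≠ 0 := by rw [← hc]; positivity
  rw [← sub_eq_zero, hre, mul_eq_zero, or_iff_right hc0, sub_eq_zero]
  refine ⟨Dvd.dvd.mul_right (hc ▸ ⟨2 ^ j, by ring⟩) _, fun h ↦ ?_⟩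
  exact ((Int.isCoprime_two_left.2 hQ).pow_left (m := 2)).dvd_of_dvd_mul_left ⟨_, h.symm⟩

lemma im_mul (hk : 3 ≤ k) (hα : NearOne k α) {β : ℤ√(-2)} (hβ : Odd β.re) :
    8 ∣ (α * β).im - β.im ∧ (α * β).im ≠ β.im := by
  obtain ⟨Q, ρ, hQ, rfl⟩ := hα
  obtain ⟨j, rfl⟩ := Nat.exists_eq_add_of_le' hk
  generalize hc : (2 ^ (j + 3) : ℤ) = c
  have him : ((1 + (c : ℤ√(-2)) * (Q * ⟨-2, 1⟩ + 8 * ρ)) * β).im - β.im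
      = c * (8 * (ρ * β).im + Q * (β.re - 2 * β.im)) := by
    simp [add_mul, mul_add]
    ring
  have hc0 : c ≠ 0 := by rw [← hc]; positivity
  rw [← sub_ne_zero, him, mul_ne_zero_iff, and_iff_right hc0]
  refine ⟨Dvd.dvd.mul_right (hc ▸ ⟨2 ^ j, by ring⟩) _, ?_⟩
  obtain ⟨r, hr⟩ := hQ.mul (hβ.sub_even (even_two_mul β.im))
  omega

end NearOne

lemma nearOne_θ_pow_two_pow (t : ℕ) : NearOne (t + 3) (θ ^ 2 ^ (t + 3)) := by
  induction t with
  | zero => exact ⟨7, 2, by decide, by decide⟩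
  | succ t ih =>
    rw [pow_succ 2 (t + 3), pow_mul]
    exact ih.sq (by omega)

lemma exists_nearOne_mul_θ_pow {n : ℕ} (hn : 8 ≤ n) :
    ∃ k α, 3 ≤ k ∧ NearOne k α ∧ θ ^ n = α * θ ^ (n % 8) := by
  obtain ⟨t, s, hs, hts⟩ := Nat.exists_eq_two_pow_mul_odd (n := n / 8) (by omega)
  refine ⟨t + 3, _, by omega, (nearOne_θ_pow_two_pow t).pow_of_odd (by omega) hs, ?_⟩
  rw [← pow_mul, ← pow_add]
  congr 1
  rw [pow_add, mul_comm (2 ^ t), mul_assoc, ← hts]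
  omega

lemma natAbs_re_θ_pow_eq_one {n : ℕ} (h : (θ ^ n).re.natAbs = 1) :
    n = 0 ∨ n = 1 ∨ n = 2 ∨ n = 5 := by
  by_cases hn : n < 8
  · interval_cases n <;> simp_all [θ, pow_succ]
  obtain ⟨k, α, hk, hα, hθ⟩ := exists_nearOne_mul_θ_pow (not_lt.1 hn)
  obtain ⟨h16, h4⟩ := hα.re_mul hk (θ ^ (n % 8))
  rw [← hθ] at h16 h4
  generalize (θ ^ n).re = x at h h16 h4
  have : n % 8 < 8 := Nat.mod_lt _ (by norm_num)
  interval_cases n % 8 <;> simp [θ, pow_succ] at h16 h4 <;> omega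

lemma natAbs_im_θ_pow_eq_one {n : ℕ} (h : (θ ^ n).im.natAbs = 1) : n = 1 ∨ n = 3 := by
  by_cases hn : n < 8
  · interval_cases n <;> simp_all [θ, pow_succ]
  obtain ⟨k, α, hk, hα, hθ⟩ := exists_nearOne_mul_θ_pow (not_lt.1 hn)
  have : n % 8 < 8 := Nat.mod_lt _ (by norm_num)
  have hodd : Odd (θ ^ (n % 8)).re := by interval_cases n % 8 <;> decide
  obtain ⟨h8, hne⟩ := hα.im_mul hk hodd
  rw [← hθ] at h8 hne
  generalize (θ ^ n).im = x at h h8 hne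
  interval_cases n % 8 <;> simp [θ, pow_succ] at h8 hne <;> omega

lemma two_mul_sq_add_one_eq_three_pow {Y n : ℕ} (h : 2 * Y ^ 2 + 1 = 3 ^ n) :
    Y = 0 ∧ n = 0 ∨ Y = 1 ∧ n = 1 ∨ Y = 2 ∧ n = 2 ∨ Y = 11 ∧ n = 5 := by
  obtain ⟨hre, him⟩ := natAbs_eq_θ_pow n (x := 1) (z := Y)
    (by rw [one_pow]; exact_mod_cast (by omega : 1 + 2 * Y ^ 2 = 3 ^ n)) isCoprime_one_left
  rw [Int.natAbs_one, Int.natAbs_natCast] at *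
  rcases natAbs_re_θ_pow_eq_one hre.symm with rfl | rfl | rfl | rfl <;>
    simp [θ, pow_succ] at him <;> simp [him]

lemma sq_add_two_eq_three_pow {Y n : ℕ} (h : Y ^ 2 + 2 = 3 ^ n) :
    Y = 1 ∧ n = 1 ∨ Y = 5 ∧ n = 3 := by
  obtain ⟨hre, him⟩ := natAbs_eq_θ_pow n (x := Y) (z := 1)
    (by rw [one_pow]; exact_mod_cast (by omega : Y ^ 2 + 2 * 1 = 3 ^ n)) isCoprime_one_right
  rw [Int.natAbs_one, Int.natAbs_natCast] at *
  rcases natAbs_im_θ_pow_eq_one him.symm with rfl | rfl <;>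
    simp [θ, pow_succ] at hre <;> simp [hre]

lemma pow_eq_ite_of_sq_eq_one {M : Type*} [Monoid M] {x : M} (hx : x ^ 2 = 1) (n : ℕ) :
    x ^ n = if Even n then 1 else x := by
  obtain ⟨j, rfl | rfl⟩ := Nat.even_or_odd' n <;> simp [pow_succ, pow_mul, hx, parity_simps]

lemma three_pow_add_one_eq_two_pow {v w : ℕ} (h : 3 ^ v + 1 = 2 ^ w) :
    v = 0 ∧ w = 1 ∨ v = 1 ∧ w = 2 := by
  have hw : w < 3 := by
    by_contra! hw
    have h8 := congrArg (Nat.cast : ℕ → ZMod 8) h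
    push_cast at h8
    rw [pow_eq_zero_of_le hw (by decide), pow_eq_ite_of_sq_eq_one (by decide)] at h8
    split_ifs at h8 <;> revert h8 <;> decide
  interval_cases w <;> simp [Nat.pow_eq_self_iff] at h ⊢ <;> omega

lemma exists_pow_of_sq_add_pow_eq_sq {p Y a u : ℕ} (hp : p.Prime) (h : Y ^ 2 + p ^ u = a ^ 2) :
    ∃ i j, i + j = u ∧ Y + p ^ i = a ∧ a + Y = p ^ j := by
  have hprod : (a + Y) * (a - Y) = p ^ u := by rw [← Nat.sq_sub_sq, ← h, Nat.add_sub_cancel_left]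
  obtain ⟨j, hj, hj'⟩ := (Nat.dvd_prime_pow hp).1 (Dvd.intro _ hprod)
  have hYa : Y < a := Nat.sub_pos_iff_lt.1 (Nat.pos_of_mul_pos_left (hprod ▸ pow_pos hp.pos u))
  refine ⟨u - j, j, by omega, ?_, hj'⟩
  rw [hj', ← Nat.pow_sub_mul_pow p hj, mul_comm] at hprod
  have := Nat.eq_of_mul_eq_mul_right (pow_pos hp.pos j) hprod
  omega

lemma three_pow_eq_two_pow_add_one {k w : ℕ} (h : 3 ^ k = 2 ^ w + 1) :
    k = 1 ∧ w = 1 ∨ k = 2 ∧ w = 3 := by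
  rcases lt_or_ge w 2 with hw | hw
  · interval_cases w
    · exact absurd (h ▸ Odd.pow (by decide) : Odd (2 ^ 0 + 1)) (by decide)
    · exact .inl ⟨(Nat.pow_eq_self_iff (by norm_num)).1 h, rfl⟩
  have hk : Even k := by
    by_contra hk
    have h4 := congrArg (Nat.cast : ℕ → ZMod 4) h
    push_cast at h4
    rw [pow_eq_zero_of_le hw (by decide), pow_eq_ite_of_sq_eq_one (by decide), if_neg hk] at h4
    revert h4
    decide
  obtain ⟨j, rfl⟩ := hk
  obtain ⟨_, _, -, -, hj⟩ := exists_pow_of_sq_add_pow_eq_sq (Y := 1) (a := 3 ^ j) Nat.prime_two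
    (by rw [← pow_mul, mul_two, h]; ring)
  rcases three_pow_add_one_eq_two_pow hj with ⟨rfl, -⟩ | ⟨rfl, -⟩
  · simp at h
  · exact .inr ⟨rfl, Nat.pow_right_injective le_rfl (by simpa using h.symm : 2 ^ w = 2 ^ 3)⟩

lemma sq_add_one_eq_two_pow_mul_three_pow {Y m n : ℕ} (hY : Y ≠ 0)
    (h : Y ^ 2 + 1 = 2 ^ m * 3 ^ n) : Y = 1 ∧ m = 1 ∧ n = 0 := by
  have hn : n = 0 := by
    by_contra hn
    have h3 := congrArg (Nat.cast : ℕ → ZMod 3) h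
    push_cast at h3
    rw [(by decide : (3 : ZMod 3) = 0), zero_pow hn, mul_zero] at h3
    generalize (Y : ZMod 3) = y at h3
    revert y
    decide
  have hm : m < 2 := by
    by_contra! hm
    have h4 := congrArg (Nat.cast : ℕ → ZMod 4) h
    push_cast at h4
    rw [pow_eq_zero_of_le hm (by decide), zero_mul] at h4
    generalize (Y : ZMod 4) = y at h4
    revert y
    decide
  subst hn
  interval_cases m <;> simp_all

lemma three_mul_sq_add_one_eq_two_pow {Y m : ℕ} (hY : Y ≠ 0) (h : 3 * Y ^ 2 + 1 = 2 ^ m) :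
    Y = 1 ∧ m = 2 := by
  have hm : m < 3 := by
    by_contra! hm
    have h8 := congrArg (Nat.cast : ℕ → ZMod 8) h
    push_cast at h8
    rw [pow_eq_zero_of_le hm (by decide)] at h8
    generalize (Y : ZMod 8) = y at h8
    revert y
    decide
  interval_cases m <;> simp_all

lemma sq_add_two_pow_eq_three_pow {Y u n : ℕ} (hu : 2 ≤ u) (h : Y ^ 2 + 2 ^ u = 3 ^ n) :
    Y = 1 ∧ u = 3 ∧ n = 2 ∨ Y = 7 ∧ u = 5 ∧ n = 4 := by
  have hn : Even n := by
    by_contra hn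
    have h4 := congrArg (Nat.cast : ℕ → ZMod 4) h
    push_cast at h4
    rw [pow_eq_zero_of_le hu (by decide), pow_eq_ite_of_sq_eq_one (x := (3 : ZMod 4)) (by decide),
      if_neg hn] at h4
    generalize (Y : ZMod 4) = y at h4
    revert y
    decide
  obtain ⟨k, rfl⟩ := hn
  obtain ⟨i, j, hij, hi, hj⟩ :=
    exists_pow_of_sq_add_pow_eq_sq (Y := Y) (u := u) (a := 3 ^ k) Nat.prime_two (by rw [← pow_mul, mul_two, h])
  obtain ⟨r, hr⟩ : Odd (3 ^ k) := Odd.pow (by decide)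
  -- `(3^k - Y) + (3^k + Y) = 2 * 3^k` is `2` modulo `4`, so the smaller power of two is `2`
  have hi1 : i = 1 := by
    have hij' : i ≤ j := (Nat.pow_le_pow_iff_right one_lt_two).1 (by omega)
    have h2j : 2 ∣ 2 ^ j := dvd_pow_self 2 (by omega)
    rcases i with _ | _ | i
    · rw [pow_zero] at hi
      omega
    · rfl
    · have h4i : 4 ∣ 2 ^ (i + 2) := Dvd.intro_left _ (pow_add 2 i 2).symm
      have h4j : 4 ∣ 2 ^ j := by simpa using Nat.pow_dvd_pow 2 (show 2 ≤ j by omega)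
      omega
  subst hi1
  obtain ⟨w, rfl⟩ := Nat.exists_eq_add_of_le' (show 1 ≤ j by omega)
  rw [pow_one] at hi
  rw [pow_succ] at hj
  rcases three_pow_eq_two_pow_add_one (k := k) (w := w) (by omega) with ⟨rfl, rfl⟩ | ⟨rfl, rfl⟩
  · simp at hi
    omega
  · simp at hi
    omega

lemma sq_add_three_pow_eq_two_pow {Y v m : ℕ} (hv : v ≠ 0) (h : Y ^ 2 + 3 ^ v = 2 ^ m) :
    Y = 1 ∧ v = 1 ∧ m = 2 := by
  have hm : Even m := by
    by_contra hm
    have h3 := congrArg (Nat.cast : ℕ → ZMod 3) h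
    push_cast at h3
    rw [(by decide : (3 : ZMod 3) = 0), zero_pow hv,
      pow_eq_ite_of_sq_eq_one (x := (2 : ZMod 3)) (by decide), if_neg hm] at h3
    generalize (Y : ZMod 3) = y at h3
    revert y
    decide
  obtain ⟨k, rfl⟩ := hm
  obtain ⟨i, j, hij, hi, hj⟩ :=
    exists_pow_of_sq_add_pow_eq_sq (Y := Y) (u := v) (a := 2 ^ k) Nat.prime_three (by rw [← pow_mul, mul_two, h])
  have hi0 : i = 0 := by
    by_contra hi0
    have hij' : i ≤ j := (Nat.pow_le_pow_iff_right (show 1 < 3 by norm_num)).1 (by omega)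
    have h3 : 3 ∣ 2 ^ (k + 1) := by
      have := dvd_pow_self 3 hi0
      have := dvd_pow_self 3 (show j ≠ 0 by omega)
      rw [pow_succ]
      omega
    exact absurd (Nat.prime_three.dvd_of_dvd_pow h3) (by norm_num)
  subst hi0
  rw [pow_zero] at hi
  rcases three_pow_add_one_eq_two_pow (v := j) (w := k + 1) (by rw [pow_succ]; omega) with
    ⟨rfl, -⟩ | ⟨rfl, hk⟩
  · omega
  · obtain rfl : k = 1 := by omega
    omega

/-- The triples `(a, b, -c)` of the theorem. -/
def solutionTriples : List (ℕ × ℕ × ℕ) :=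
  [(1, 2, 1), (1, 4, 3), (1, 3, 2), (1, 9, 8), (25, 27, 2), (49, 81, 32), (2, 3, 1), (8, 9, 1),
    (242, 243, 1), (3, 4, 1)]

lemma Nat.Prime.dvd_pow_mul_pow_iff {p q a b : ℕ} (hp : p.Prime) (hq : q.Prime) (hpq : p ≠ q) :
    p ∣ p ^ a * q ^ b ↔ a ≠ 0 := by
  refine ⟨?_, fun ha ↦ dvd_mul_of_dvd_left (dvd_pow_self p ha) _⟩
  rintro h rfl
  rw [pow_zero, one_mul] at h
  exact hpq ((Nat.prime_dvd_prime_iff_eq hp hq).1 (hp.dvd_of_dvd_pow h))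

lemma eq_zero_or_eq_zero_of_coprime {p m u B C : ℕ} (hp : p.Prime) (hB : p ^ m ∣ B)
    (hC : p ^ u ∣ C) (hBC : B.Coprime C) : m = 0 ∨ u = 0 := by
  by_contra! h
  exact hp.one_lt.ne' (Nat.eq_one_of_dvd_coprimes hBC ((dvd_pow_self p h.1).trans hB)
    ((dvd_pow_self p h.2).trans hC))

lemma eq_zero_of_dvd_of_add_eq {p q d Y m n u v : ℕ} (hp : p.Prime) (hq : q.Prime) (hpq : p ≠ q)
    (hd : p ∣ d) (hmu : m = 0 ∨ u = 0) (h : d * Y ^ 2 + p ^ u * q ^ v = p ^ m * q ^ n) :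
    m = 0 ∧ u = 0 := by
  have key : p ∣ p ^ u * q ^ v ↔ p ∣ p ^ m * q ^ n :=
    h ▸ (Nat.dvd_add_right (dvd_mul_of_dvd_left hd _)).symm
  rw [hp.dvd_pow_mul_pow_iff hq hpq, hp.dvd_pow_mul_pow_iff hq hpq] at key
  omega

lemma mem_solutionTriples_of_sq_add {Y m n u v : ℕ} (hY : Y ≠ 0) (hmu : m = 0 ∨ u = 0)
    (hnv : n = 0 ∨ v = 0) (h : Y ^ 2 + 2 ^ u * 3 ^ v = 2 ^ m * 3 ^ n) :
    (Y ^ 2, 2 ^ m * 3 ^ n, 2 ^ u * 3 ^ v) ∈ solutionTriples := by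
  rcases Nat.eq_zero_or_pos u with rfl | hu <;> rcases Nat.eq_zero_or_pos v with rfl | hv
  · obtain ⟨rfl, rfl, rfl⟩ := sq_add_one_eq_two_pow_mul_three_pow hY (by simpa using h)
    decide
  · obtain rfl := hnv.resolve_right hv.ne'
    obtain ⟨rfl, rfl, rfl⟩ := sq_add_three_pow_eq_two_pow hv.ne' (by simpa using h)
    decide
  · obtain rfl := hmu.resolve_right hu.ne'
    rcases (show 2 ≤ u ∨ u = 1 by omega) with hu | rfl
    · rcases sq_add_two_pow_eq_three_pow hu (by simpa using h) with
        ⟨rfl, rfl, rfl⟩ | ⟨rfl, rfl, rfl⟩ <;> decide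
    · rcases sq_add_two_eq_three_pow (by simpa using h) with ⟨rfl, rfl⟩ | ⟨rfl, rfl⟩ <;> decide
  · obtain rfl := hmu.resolve_right hu.ne'
    obtain rfl := hnv.resolve_right hv.ne'
    have : 0 < Y ^ 2 := by positivity
    have : 0 < 2 ^ u * 3 ^ v := by positivity
    simp at h
    omega

theorem mem_solutionTriples {d Y B C : ℕ} (hd : d = 1 ∨ d = 2 ∨ d = 3 ∨ d = 6) (hY : Y ≠ 0)
    (hB : ∃ m n, B = 2 ^ m * 3 ^ n) (hC : ∃ u v, C = 2 ^ u * 3 ^ v) (hBC : B.Coprime C)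
    (h : d * Y ^ 2 + C = B) : (d * Y ^ 2, B, C) ∈ solutionTriples := by
  obtain ⟨m, n, rfl⟩ := hB
  obtain ⟨u, v, rfl⟩ := hC
  have hmu := eq_zero_or_eq_zero_of_coprime Nat.prime_two (dvd_mul_right _ _) (dvd_mul_right _ _) hBC
  have hnv := eq_zero_or_eq_zero_of_coprime Nat.prime_three (dvd_mul_left _ _) (dvd_mul_left _ _) hBC
  have h2 (hd : 2 ∣ d) : m = 0 ∧ u = 0 :=
    eq_zero_of_dvd_of_add_eq Nat.prime_two Nat.prime_three (by norm_num) hd hmu h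
  have h3 (hd : 3 ∣ d) : n = 0 ∧ v = 0 :=
    eq_zero_of_dvd_of_add_eq Nat.prime_three Nat.prime_two (by norm_num) hd hnv
      (by rwa [mul_comm (3 ^ v), mul_comm (3 ^ n)])
  have hCB : 2 ^ u * 3 ^ v < 2 ^ m * 3 ^ n := by
    have : 0 < d * Y ^ 2 := by rcases hd with rfl | rfl | rfl | rfl <;> positivity
    omega
  rcases hd with rfl | rfl | rfl | rfl
  · simpa using mem_solutionTriples_of_sq_add hY hmu hnv (by simpa using h)
  · obtain ⟨rfl, rfl⟩ := h2 (dvd_refl 2)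
    obtain rfl : v = 0 := hnv.resolve_left fun hn ↦ by subst hn; simp at hCB
    rcases two_mul_sq_add_one_eq_three_pow (by simpa using h) with
      ⟨rfl, rfl⟩ | ⟨rfl, rfl⟩ | ⟨rfl, rfl⟩ | ⟨rfl, rfl⟩ <;> first | exact absurd rfl hY | decide
  · obtain ⟨rfl, rfl⟩ := h3 (dvd_refl 3)
    obtain rfl : u = 0 := hmu.resolve_left fun hm ↦ by subst hm; simp at hCB
    obtain ⟨rfl, rfl⟩ := three_mul_sq_add_one_eq_two_pow hY (by simpa using h)
    decide
  · obtain ⟨rfl, rfl⟩ := h2 (by norm_num)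
    obtain ⟨rfl, rfl⟩ := h3 (by norm_num)
    simp at hCB

theorem two_three_unit_square_equations
    (a b c : ℤ) (habc : a = b + c) (ha : a ≠ 0) (hc : c < 0)
    (hb23 : TwoThreeUnit b) (hc23 : TwoThreeUnit c) (hgcd : Int.gcd b c = 1)
    (hsq : (∃ x : ℤ, a = x ^ 2) ∨ (∃ x : ℤ, 2 * a = x ^ 2) ∨
      (∃ x : ℤ, 3 * a = x ^ 2) ∨ (∃ x : ℤ, 6 * a = x ^ 2)) :
    (a, b, c) ∈ ([(1, 2, -1), (1, 4, -3), (1, 3, -2), (1, 9, -8), (25, 27, -2),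
      (49, 81, -32), (2, 3, -1), (8, 9, -1), (242, 243, -1), (3, 4, -1)] :
        List (ℤ × ℤ × ℤ)) := by
  obtain ⟨d, hd, x, hx⟩ : ∃ d : ℕ, (d = 1 ∨ d = 2 ∨ d = 3 ∨ d = 6) ∧ ∃ x : ℤ, d * a = x ^ 2 := by
    rcases hsq with ⟨x, hx⟩ | ⟨x, hx⟩ | ⟨x, hx⟩ | ⟨x, hx⟩
    exacts [⟨1, by simp, x, by simpa using hx⟩, ⟨2, by simp, x, hx⟩, ⟨3, by simp, x, hx⟩,
      ⟨6, by simp, x, hx⟩]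
  have hsf : Squarefree d := by
    rcases hd with rfl | rfl | rfl | rfl
    exacts [squarefree_one, Nat.prime_two.squarefree, Nat.prime_three.squarefree, by decide +kernel]
  obtain ⟨Y, rfl⟩ := exists_eq_mul_sq_of_mul_eq_sq hsf hx
  have hY : Y ≠ 0 := by rintro rfl; simp at ha
  have hmem := mem_solutionTriples hd hY hb23.exists_natAbs_eq hc23.exists_natAbs_eq hgcd (by omega)
  have hlist : ([(1, 2, -1), (1, 4, -3), (1, 3, -2), (1, 9, -8), (25, 27, -2),
      (49, 81, -32), (2, 3, -1), (8, 9, -1), (242, 243, -1), (3, 4, -1)] : List (ℤ × ℤ × ℤ)) =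
      solutionTriples.map fun t ↦ ((t.1 : ℤ), (t.2.1 : ℤ), -(t.2.2 : ℤ)) := rfl
  rw [hlist]
  exact List.mem_map.2 ⟨(d * Y ^ 2, b.natAbs, c.natAbs), hmem, by
    simp only [Prod.mk.injEq]
    exact ⟨trivial, by omega, by omega⟩⟩
end

section
/- Let m be a nonzero cube-free integer, let Q be a point of infinite order on E: y^2 = x^3 - 432m^2, let n ≥ 2, and let p ≥ 5 be a prime that is a primitive divisor of A_n (that is, p ∣ A_n and p ∤ A_k for all 1 ≤ k < n). Then p ∤ m (so p is a prime of good reduction for E), and the rank of apparition of p in the sequence (B_k) is 3n: p divides B_{3n} and p does not divide B_r for any 1 ≤ r < 3n. -/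
open WeierstrassCurve

/-!
Write `x k = A k / B k ^ 2` for the `x`-coordinate of `k • Q` and `c = -432 m²`, and measure
everything with the `p`-adic norm: `p ∣ A k` iff `‖x k‖ < 1`, and `p ∣ B k` iff `‖x k‖ > 1`, i.e.
iff `k • Q` reduces to the origin mod `p`. Comparing norms in the addition and duplication formulas
for `x (k + l)`, `x (k - l)` and `x (2 k)` shows:

* the indices `k` with `‖x k‖ > 1` are exactly the multiples of the least such index `N`;
* if `p ∣ m`, the relations expressing `x (n ± 1)` through `x n` and `x 1` are incompatible with
  `‖x n‖ < 1 ≤ ‖x (n - 1)‖` and `‖x 1‖ = 1`, which primitivity provides; so `‖c‖ = 1` and `p ∤ m`;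
* if `‖c‖ = 1` and `‖x k‖ < 1`, then `‖x (3 k)‖ > 1`; hence `N ∣ 3 n`, and `N ∤ n`.

So `N = 3 g` with `g ∣ n`. If `N < 3 n` then `g < n`, and `‖x g‖ = 1` by primitivity: `g • Q`
reduces to a point of order `3`, so every `j • (g • Q)` with `3 ∤ j` reduces to `±(g • Q)`, giving
`x n ≡ x g` (a `p`-adic unit), against `p ∣ A n`.
-/

namespace padicNorm

variable {p : ℕ} [Fact p.Prime] {q r t : ℚ}

protected theorem pow (q : ℚ) (n : ℕ) : padicNorm p (q ^ n) = padicNorm p q ^ n :=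
  IsAbsoluteValue.abv_pow (padicNorm p) q n

protected theorem inv (q : ℚ) : padicNorm p q⁻¹ = (padicNorm p q)⁻¹ :=
  IsAbsoluteValue.abv_inv (padicNorm p) q

protected theorem pos {q : ℚ} (hq : q ≠ 0) : 0 < padicNorm p q :=
  (padicNorm.nonneg q).lt_of_ne (padicNorm.nonzero hq).symm

protected theorem ofNat_le_one (n : ℕ) [n.AtLeastTwo] : padicNorm p (OfNat.ofNat n : ℚ) ≤ 1 := by
  have := padicNorm.of_nat (p := p) (OfNat.ofNat n); rwa [Nat.cast_ofNat] at this

protected theorem pow_lt_one (hq : padicNorm p q < 1) {n : ℕ} (hn : n ≠ 0) :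
    padicNorm p (q ^ n) < 1 := by
  rw [padicNorm.pow]; exact pow_lt_one₀ (padicNorm.nonneg q) hq hn

protected theorem add_eq_left_of_lt (h : padicNorm p r < padicNorm p q) :
    padicNorm p (q + r) = padicNorm p q := by
  rw [add_eq_max_of_ne h.ne', max_eq_left h.le]

protected theorem add_eq_right_of_lt (h : padicNorm p q < padicNorm p r) :
    padicNorm p (q + r) = padicNorm p r := by
  rw [add_comm, padicNorm.add_eq_left_of_lt h]

protected theorem sub_eq_left_of_lt (h : padicNorm p r < padicNorm p q) :
    padicNorm p (q - r) = padicNorm p q := by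
  rw [sub_eq_add_neg, padicNorm.add_eq_left_of_lt (by rwa [padicNorm.neg])]

protected theorem sub_eq_right_of_lt (h : padicNorm p q < padicNorm p r) :
    padicNorm p (q - r) = padicNorm p r := by
  rw [sub_eq_add_neg, padicNorm.add_eq_right_of_lt (by rwa [padicNorm.neg]), padicNorm.neg]

protected theorem add_lt (hq : padicNorm p q < t) (hr : padicNorm p r < t) :
    padicNorm p (q + r) < t :=
  padicNorm.nonarchimedean.trans_lt (max_lt hq hr)

protected theorem sub_lt (hq : padicNorm p q < t) (hr : padicNorm p r < t) :
    padicNorm p (q - r) < t :=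
  padicNorm.sub.trans_lt (max_lt hq hr)

protected theorem add_le (hq : padicNorm p q ≤ t) (hr : padicNorm p r ≤ t) :
    padicNorm p (q + r) ≤ t :=
  padicNorm.nonarchimedean.trans (max_le hq hr)

protected theorem sub_le (hq : padicNorm p q ≤ t) (hr : padicNorm p r ≤ t) :
    padicNorm p (q - r) ≤ t :=
  padicNorm.sub.trans (max_le hq hr)

protected theorem mul_le_one (hq : padicNorm p q ≤ 1) (hr : padicNorm p r ≤ 1) :
    padicNorm p (q * r) ≤ 1 := by
  rw [padicNorm.mul]; exact mul_le_one₀ hq (padicNorm.nonneg r) hr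

protected theorem mul_lt_one_left (hq : padicNorm p q < 1) (hr : padicNorm p r ≤ 1) :
    padicNorm p (q * r) < 1 := by
  rw [padicNorm.mul]; exact mul_lt_one_of_nonneg_of_lt_one_left (padicNorm.nonneg q) hq hr

protected theorem mul_lt_one_right (hq : padicNorm p q ≤ 1) (hr : padicNorm p r < 1) :
    padicNorm p (q * r) < 1 := by
  rw [mul_comm]; exact padicNorm.mul_lt_one_left hr hq

end padicNorm

theorem Nat.exists_eq_three_mul_of_dvd_three_mul {N n : ℕ} (h : N ∣ 3 * n) (hN : ¬ N ∣ n) :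
    ∃ g, N = 3 * g ∧ g ∣ n := by
  have h3 : 3 ∣ N := by
    by_contra h3
    exact hN (Nat.Coprime.dvd_of_dvd_mul_left
      (Nat.coprime_comm.mp ((Nat.Prime.coprime_iff_not_dvd Nat.prime_three).mpr h3)) h)
  obtain ⟨g, rfl⟩ := h3
  exact ⟨g, rfl, Nat.dvd_of_mul_dvd_mul_left (by norm_num) h⟩

/-- The relations satisfied by the `x`-coordinates `x k` of the multiples `k • Q` (`k ≥ 1`) of a
point `Q` of infinite order on `y² = x³ + c`. -/
structure IsXCoordSeq (c : ℚ) (x : ℕ → ℚ) : Prop where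
  ne_zero : ∀ ⦃k⦄, 1 ≤ k → x k ≠ 0
  ne : ∀ ⦃k l⦄, 1 ≤ l → l < k → x k ≠ x l
  add_mul_sub : ∀ ⦃k l⦄, 1 ≤ l → l < k →
    x (k + l) * x (k - l) * (x k - x l) ^ 2 = (x k * x l) ^ 2 - 4 * c * (x k + x l)
  add_add_sub : ∀ ⦃k l⦄, 1 ≤ l → l < k →
    (x (k + l) + x (k - l)) * (x k - x l) ^ 2 = 2 * ((x k + x l) * (x k * x l) + 2 * c)
  double : ∀ ⦃k⦄, 1 ≤ k → x (2 * k) * (4 * (x k ^ 3 + c)) = x k * (x k ^ 3 - 8 * c)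

section

variable {p : ℕ} [Fact p.Prime]

theorem not_dvd_of_gcd_eq_one {a b : ℤ} (hab : Int.gcd a b = 1) (ha : (p : ℤ) ∣ a) :
    ¬ (p : ℤ) ∣ b := fun hb =>
  (Nat.prime_iff_prime_int.mp Fact.out).not_isUnit
    ((Int.isCoprime_iff_gcd_eq_one.mpr hab).isUnit_of_dvd' ha hb)

theorem padicNorm_div_sq_lt_one_iff {a b : ℤ} (hab : Int.gcd a b = 1) (hb : b ≠ 0) :
    padicNorm p (a / b ^ 2) < 1 ↔ (p : ℤ) ∣ a := by
  rw [padicNorm.div, padicNorm.pow]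
  by_cases ha : (p : ℤ) ∣ a
  · rw [(padicNorm.int_eq_one_iff b).2 (not_dvd_of_gcd_eq_one hab ha), one_pow, div_one]
    exact iff_of_true ((padicNorm.int_lt_one_iff a).2 ha) ha
  · have hb0 : 0 < padicNorm p b := padicNorm.pos (Int.cast_ne_zero.mpr hb)
    rw [(padicNorm.int_eq_one_iff a).2 ha, div_lt_one (by positivity)]
    exact iff_of_false (by nlinarith [padicNorm.of_int (p := p) b]) ha

theorem one_lt_padicNorm_div_sq_iff {a b : ℤ} (hab : Int.gcd a b = 1) (hb : b ≠ 0) :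
    1 < padicNorm p (a / b ^ 2) ↔ (p : ℤ) ∣ b := by
  rw [padicNorm.div, padicNorm.pow]
  by_cases hpb : (p : ℤ) ∣ b
  · have hb0 : 0 < padicNorm p b := padicNorm.pos (Int.cast_ne_zero.mpr hb)
    have hb1 := (padicNorm.int_lt_one_iff b).2 hpb
    rw [(padicNorm.int_eq_one_iff a).2 (not_dvd_of_gcd_eq_one (Int.gcd_comm a b ▸ hab) hpb),
      one_lt_div (by positivity)]
    exact iff_of_true (by nlinarith) hpb
  · rw [(padicNorm.int_eq_one_iff b).2 hpb, one_pow, div_one]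
    exact iff_of_false (not_lt.2 (padicNorm.of_int a)) hpb

theorem one_lt_padicNorm_of_mul_mul_sq_eq_one {Y Z d : ℚ} (hd : padicNorm p d < 1)
    (hprod : padicNorm p (Y * Z * d ^ 2) = 1) (hsum : padicNorm p ((Y + Z) * d ^ 2) < 1) :
    1 < padicNorm p Y := by
  rw [padicNorm.mul, padicNorm.mul, padicNorm.pow] at hprod
  rw [padicNorm.mul, padicNorm.pow] at hsum
  by_contra! hY
  have hY0 := padicNorm.nonneg (p := p) Y
  have hZ0 := padicNorm.nonneg (p := p) Z
  have hd0 := padicNorm.nonneg (p := p) d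
  have hZd : 1 ≤ padicNorm p Z * padicNorm p d ^ 2 :=
    calc 1 = padicNorm p Y * (padicNorm p Z * padicNorm p d ^ 2) := by rw [← hprod]; ring
      _ ≤ padicNorm p Z * padicNorm p d ^ 2 := mul_le_of_le_one_left (by positivity) hY
  have hd2 : padicNorm p d ^ 2 < 1 := by nlinarith
  have hYZ : padicNorm p Y < padicNorm p Z := by nlinarith
  rw [padicNorm.add_eq_right_of_lt hYZ] at hsum
  linarith

/- The two cases of the inductive step for a point `g • Q` of order `3` mod `p`, with `a = x g`,
`X = x ((i + 1) g)`, `Y = x ((i + 2) g)`, `Z = x (i g)`: one of `X`, `Z` reduces to the origin,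
the other to `±(g • Q)`, and then so does `Y`. -/

theorem padicNorm_sub_lt_one_of_one_lt_padicNorm (h2 : padicNorm p 2 = 1)
    (h3 : padicNorm p 3 = 1) {c a X Y Z : ℚ} (hc : padicNorm p c ≤ 1) (ha : padicNorm p a = 1)
    (hX : 1 < padicNorm p X) (hZ : padicNorm p (Z - a) < 1)
    (hE2 : (Y + Z) * (X - a) ^ 2 = 2 * ((X + a) * (X * a) + 2 * c)) :
    padicNorm p (Y - a) < 1 := by
  have key : (Y + Z - 2 * a) * (X - a) ^ 2 = 2 * (3 * a ^ 2 * X + (2 * c - a ^ 3)) := by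
    linear_combination hE2
  have hXa : padicNorm p (X - a) = padicNorm p X := padicNorm.sub_eq_left_of_lt (by rwa [ha])
  have h3aX : padicNorm p (3 * a ^ 2 * X) = padicNorm p X := by
    rw [padicNorm.mul, padicNorm.mul, padicNorm.pow, h3, ha, one_pow, one_mul, one_mul]
  have hbounded : padicNorm p (2 * c - a ^ 3) ≤ 1 :=
    padicNorm.sub_le (padicNorm.mul_le_one (padicNorm.ofNat_le_one 2) hc)
      (by rw [padicNorm.pow, ha, one_pow])
  have hrest : padicNorm p (3 * a ^ 2 * X + (2 * c - a ^ 3)) = padicNorm p X := by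
    rw [padicNorm.add_eq_left_of_lt (by rw [h3aX]; exact hbounded.trans_lt hX), h3aX]
  have hX0 : 0 < padicNorm p X := by linarith
  have hsum : padicNorm p (Y + Z - 2 * a) * padicNorm p X = 1 := by
    have := congrArg (padicNorm p) key
    rw [padicNorm.mul, padicNorm.mul, padicNorm.pow, hXa, hrest, h2, one_mul] at this
    exact mul_right_cancel₀ hX0.ne' (by linear_combination this)
  have hsum' : padicNorm p (Y + Z - 2 * a) < 1 := by
    by_contra! h
    nlinarith
  rw [show Y - a = (Y + Z - 2 * a) - (Z - a) by ring]
  exact padicNorm.sub_lt hsum' hZ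

theorem padicNorm_sub_lt_one_of_padicNorm_sub_lt_one (h2 : padicNorm p 2 = 1)
    (h3 : padicNorm p 3 = 1) {c a X Y Z : ℚ} (hc : padicNorm p c = 1) (ha : padicNorm p a = 1)
    (ha3 : padicNorm p (a ^ 3 + 4 * c) < 1) (hX : padicNorm p (X - a) < 1)
    (hY : padicNorm p Y ≤ 1) (hZ : 1 < padicNorm p Z)
    (hE1 : Y * Z * (X - a) ^ 2 = (X * a) ^ 2 - 4 * c * (X + a))
    (hE2 : (Y + Z) * (X - a) ^ 2 = 2 * ((X + a) * (X * a) + 2 * c)) :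
    padicNorm p (Y - a) < 1 := by
  have hcube : padicNorm p (a ^ 3 + c) = 1 := by
    have h3c : padicNorm p (3 * c) = 1 := by rw [padicNorm.mul, h3, hc, one_mul]
    rw [show a ^ 3 + c = (a ^ 3 + 4 * c) - 3 * c by ring,
      padicNorm.sub_eq_right_of_lt (by rwa [h3c]), h3c]
  have hZD : padicNorm p Z * padicNorm p (X - a) ^ 2 = 1 := by
    have key : (Y + Z) * (X - a) ^ 2
        = 2 * (2 * (a ^ 3 + c) + (X - a) * (3 * a ^ 2 + a * (X - a))) := by
      linear_combination hE2
    have hmain : padicNorm p (2 * (a ^ 3 + c)) = 1 := by rw [padicNorm.mul, h2, hcube, one_mul]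
    have hrest : padicNorm p ((X - a) * (3 * a ^ 2 + a * (X - a))) < 1 :=
      padicNorm.mul_lt_one_left hX (padicNorm.add_le (padicNorm.mul_le_one
        (padicNorm.ofNat_le_one 3) (by rw [padicNorm.pow, ha, one_pow]))
        (padicNorm.mul_le_one ha.le hX.le))
    have := congrArg (padicNorm p) key
    rwa [padicNorm.mul, padicNorm.mul, padicNorm.add_eq_right_of_lt (hY.trans_lt hZ), h2,
      padicNorm.add_eq_left_of_lt (by rwa [hmain]), hmain, one_mul, padicNorm.pow] at this
  have key : (Y - a) * (Z - a) * (X - a) ^ 2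
      = -3 * a * (a ^ 3 + 4 * c) - 4 * (a ^ 3 + c) * (X - a) := by
    linear_combination hE1 - a * hE2
  have hsmall : padicNorm p (-3 * a * (a ^ 3 + 4 * c) - 4 * (a ^ 3 + c) * (X - a)) < 1 :=
    padicNorm.sub_lt (padicNorm.mul_lt_one_right (padicNorm.mul_le_one
      (by rw [padicNorm.neg]; exact padicNorm.ofNat_le_one 3) ha.le) ha3)
      (padicNorm.mul_lt_one_right (padicNorm.mul_le_one (padicNorm.ofNat_le_one 4) hcube.le) hX)
  rwa [← key, padicNorm.mul, padicNorm.mul, padicNorm.pow,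
    padicNorm.sub_eq_left_of_lt (q := Z) (by rwa [ha]), mul_assoc, hZD, mul_one] at hsmall

namespace IsXCoordSeq

variable {c : ℚ} {x : ℕ → ℚ} (H : IsXCoordSeq c x)
include H

theorem one_lt_padicNorm_add_sub (hc : padicNorm p c ≤ 1) {k l : ℕ} (hl : 1 ≤ l) (hlk : l < k)
    (hk : 1 < padicNorm p (x k)) (hl' : 1 < padicNorm p (x l)) :
    1 < padicNorm p (x (k + l)) ∧ 1 < padicNorm p (x (k - l)) := by
  have hxk := H.ne_zero (hl.trans hlk.le)
  have hxl := H.ne_zero hl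
  -- In the parameter `1 / x` at the origin, the right-hand sides become a unit and a small number.
  have hprod : x (k + l) * x (k - l) * ((x k)⁻¹ - (x l)⁻¹) ^ 2
      = 1 - 4 * c * (x k)⁻¹ * (x l)⁻¹ * ((x k)⁻¹ + (x l)⁻¹) := by
    field_simp
    linear_combination H.add_mul_sub hl hlk
  have hsum : (x (k + l) + x (k - l)) * ((x k)⁻¹ - (x l)⁻¹) ^ 2
      = 2 * ((x k)⁻¹ + (x l)⁻¹) + 4 * c * (x k)⁻¹ ^ 2 * (x l)⁻¹ ^ 2 := by
    field_simp
    linear_combination H.add_add_sub hl hlk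
  have hs : padicNorm p (x k)⁻¹ < 1 := by rw [padicNorm.inv]; exact inv_lt_one_of_one_lt₀ hk
  have ht : padicNorm p (x l)⁻¹ < 1 := by rw [padicNorm.inv]; exact inv_lt_one_of_one_lt₀ hl'
  have hst : padicNorm p ((x k)⁻¹ - (x l)⁻¹) < 1 := padicNorm.sub_lt hs ht
  have h4c : padicNorm p (4 * c) ≤ 1 := padicNorm.mul_le_one (padicNorm.ofNat_le_one 4) hc
  have hsmall : padicNorm p (4 * c * (x k)⁻¹ * (x l)⁻¹ * ((x k)⁻¹ + (x l)⁻¹)) < 1 :=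
    padicNorm.mul_lt_one_right (padicNorm.mul_le_one (padicNorm.mul_le_one h4c hs.le) ht.le)
      (padicNorm.add_lt hs ht)
  have hprod' : padicNorm p (x (k + l) * x (k - l) * ((x k)⁻¹ - (x l)⁻¹) ^ 2) = 1 := by
    rw [hprod, padicNorm.sub_eq_left_of_lt (by rwa [padicNorm.one]), padicNorm.one]
  have hsum' : padicNorm p ((x (k + l) + x (k - l)) * ((x k)⁻¹ - (x l)⁻¹) ^ 2) < 1 := by
    rw [hsum]
    exact padicNorm.add_lt (padicNorm.mul_lt_one_right (padicNorm.ofNat_le_one 2)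
      (padicNorm.add_lt hs ht)) (padicNorm.mul_lt_one_right (padicNorm.mul_le_one h4c
        (padicNorm.pow_lt_one hs two_ne_zero).le) (padicNorm.pow_lt_one ht two_ne_zero))
  refine ⟨one_lt_padicNorm_of_mul_mul_sq_eq_one hst hprod' hsum', ?_⟩
  rw [mul_comm (x (k + l))] at hprod'
  rw [add_comm (x (k + l))] at hsum'
  exact one_lt_padicNorm_of_mul_mul_sq_eq_one hst hprod' hsum'

theorem one_lt_padicNorm_two_mul (hc : padicNorm p c ≤ 1) {k : ℕ} (hk : 1 ≤ k)
    (h : 1 < padicNorm p (x k)) : 1 < padicNorm p (x (2 * k)) := by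
  have hxk := H.ne_zero hk
  have hs : padicNorm p (x k)⁻¹ < 1 := by rw [padicNorm.inv]; exact inv_lt_one_of_one_lt₀ h
  have key : x (2 * k) * (4 * ((x k)⁻¹ + c * (x k)⁻¹ ^ 4)) = 1 - 8 * c * (x k)⁻¹ ^ 3 := by
    field_simp
    linear_combination H.double hk
  have hsmall : padicNorm p (4 * ((x k)⁻¹ + c * (x k)⁻¹ ^ 4)) < 1 :=
    padicNorm.mul_lt_one_right (padicNorm.ofNat_le_one 4)
      (padicNorm.add_lt hs (padicNorm.mul_lt_one_right hc (padicNorm.pow_lt_one hs four_ne_zero)))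
  have h8c : padicNorm p (8 * c * (x k)⁻¹ ^ 3) < 1 :=
    padicNorm.mul_lt_one_right (padicNorm.mul_le_one (padicNorm.ofNat_le_one 8) hc)
      (padicNorm.pow_lt_one hs three_ne_zero)
  have hone : padicNorm p (1 - 8 * c * (x k)⁻¹ ^ 3) = 1 := by
    rw [padicNorm.sub_eq_left_of_lt (by rwa [padicNorm.one]), padicNorm.one]
  by_contra! h2k
  have := congrArg (padicNorm p) key
  rw [padicNorm.mul, hone] at this
  nlinarith [padicNorm.nonneg (p := p) (x (2 * k)),
    padicNorm.nonneg (p := p) (4 * ((x k)⁻¹ + c * (x k)⁻¹ ^ 4))]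

theorem one_lt_padicNorm_add (hc : padicNorm p c ≤ 1) {k l : ℕ} (hk : 1 ≤ k) (hl : 1 ≤ l)
    (hxk : 1 < padicNorm p (x k)) (hxl : 1 < padicNorm p (x l)) :
    1 < padicNorm p (x (k + l)) := by
  rcases lt_trichotomy l k with hlk | rfl | hkl
  · exact (H.one_lt_padicNorm_add_sub hc hl hlk hxk hxl).1
  · rw [← two_mul]; exact H.one_lt_padicNorm_two_mul hc hk hxk
  · rw [add_comm]; exact (H.one_lt_padicNorm_add_sub hc hk hkl hxl hxk).1

theorem one_lt_padicNorm_iff_dvd (hc : padicNorm p c ≤ 1) {N : ℕ} (hN : 1 ≤ N)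
    (hxN : 1 < padicNorm p (x N)) (hmin : ∀ k, 1 ≤ k → k < N → padicNorm p (x k) ≤ 1)
    {r : ℕ} (hr : 1 ≤ r) : 1 < padicNorm p (x r) ↔ N ∣ r := by
  constructor
  · induction r using Nat.strong_induction_on with
    | _ r ih =>
      intro hxr
      rcases lt_trichotomy r N with hrN | rfl | hNr
      · exact absurd (hmin r hr hrN) hxr.not_ge
      · exact dvd_rfl
      · have hdvd := ih (r - N) (by omega) (by omega)
          (H.one_lt_padicNorm_add_sub hc hN hNr hxr hxN).2
        simpa [Nat.sub_add_cancel hNr.le] using Nat.dvd_add hdvd (dvd_refl N)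
  · rintro ⟨j, rfl⟩
    induction j with
    | zero => omega
    | succ j ih =>
      rcases j.eq_zero_or_pos with rfl | hj
      · simpa using hxN
      · have hNj : 1 ≤ N * j := Nat.mul_pos (by omega) hj
        rw [Nat.mul_succ]
        exact H.one_lt_padicNorm_add hc hNj hN (ih hNj) hxN

theorem padicNorm_eq_one_of_primitive (hc : padicNorm p c ≤ 1) {n : ℕ} (hn : 2 ≤ n)
    (hxn : padicNorm p (x n) < 1) (hprim : ∀ k, 1 ≤ k → k < n → 1 ≤ padicNorm p (x k)) :
    padicNorm p c = 1 := by
  refine hc.antisymm (not_lt.1 fun hc1 => ?_)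
  have hx1 : padicNorm p (x 1) = 1 := by
    refine le_antisymm (not_lt.1 fun h => ?_) (hprim 1 le_rfl (by omega))
    exact hxn.not_gt ((H.one_lt_padicNorm_iff_dvd hc le_rfl h (fun k hk hk1 => by omega)
      (by omega)).2 (one_dvd n))
  have hdiff : padicNorm p (x n - x 1) = 1 := by
    rw [padicNorm.sub_eq_right_of_lt (by rwa [hx1]), hx1]
  have hsum : padicNorm p (x n + x 1) = 1 := by
    rw [padicNorm.add_eq_right_of_lt (by rwa [hx1]), hx1]
  have hE1 := congrArg (padicNorm p) (H.add_mul_sub le_rfl (by omega : 1 < n))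
  have hE2 := congrArg (padicNorm p) (H.add_add_sub le_rfl (by omega : 1 < n))
  rw [padicNorm.mul, padicNorm.mul, padicNorm.pow, hdiff, one_pow, mul_one] at hE1
  rw [padicNorm.mul, padicNorm.pow, hdiff, one_pow, mul_one] at hE2
  have hR1 : padicNorm p ((x n * x 1) ^ 2 - 4 * c * (x n + x 1)) < 1 :=
    padicNorm.sub_lt (padicNorm.pow_lt_one (padicNorm.mul_lt_one_left hxn hx1.le) two_ne_zero)
      (padicNorm.mul_lt_one_left (padicNorm.mul_lt_one_right (padicNorm.ofNat_le_one 4) hc1)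
        hsum.le)
  have hR2 : padicNorm p (2 * ((x n + x 1) * (x n * x 1) + 2 * c)) < 1 :=
    padicNorm.mul_lt_one_right (padicNorm.ofNat_le_one 2)
      (padicNorm.add_lt (padicNorm.mul_lt_one_right hsum.le
        (padicNorm.mul_lt_one_left hxn hx1.le))
        (padicNorm.mul_lt_one_right (padicNorm.ofNat_le_one 2) hc1))
  have hZ := hprim (n - 1) (by omega) (by omega)
  have hYZ : padicNorm p (x (n + 1)) < padicNorm p (x (n - 1)) := by
    nlinarith [padicNorm.nonneg (p := p) (x (n + 1))]
  rw [padicNorm.add_eq_right_of_lt hYZ] at hE2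
  linarith

theorem padicNorm_two_mul_of_lt_one (h2 : padicNorm p 2 = 1) (hc : padicNorm p c = 1) {k : ℕ}
    (hk : 1 ≤ k) (hxk : padicNorm p (x k) < 1) :
    padicNorm p (x (2 * k)) ≤ padicNorm p (x k) ∧
      padicNorm p (x (2 * k) + x k) = padicNorm p (x k) := by
  have h4 : padicNorm p 4 = 1 := by
    rw [show (4 : ℚ) = 2 * 2 by norm_num, padicNorm.mul, h2, one_mul]
  have hcube : padicNorm p (x k ^ 3) < 1 := padicNorm.pow_lt_one hxk three_ne_zero
  have hcube_add : padicNorm p (x k ^ 3 + c) = 1 := by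
    rw [padicNorm.add_eq_right_of_lt (by rwa [hc]), hc]
  constructor
  · have := congrArg (padicNorm p) (H.double hk)
    simp only [padicNorm.mul, h4, hcube_add, mul_one] at this
    rw [this]
    exact mul_le_of_le_one_right (padicNorm.nonneg _)
      (padicNorm.sub_le hcube.le (padicNorm.mul_le_one (padicNorm.ofNat_le_one 8) hc.le))
  · have key : (x (2 * k) + x k) * (4 * (x k ^ 3 + c)) = x k * (5 * x k ^ 3 - 4 * c) := by
      linear_combination H.double hk
    have h4c : padicNorm p (4 * c) = 1 := by rw [padicNorm.mul, h4, hc, one_mul]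
    have h5x : padicNorm p (5 * x k ^ 3) < 1 :=
      padicNorm.mul_lt_one_right (padicNorm.ofNat_le_one 5) hcube
    have h5 : padicNorm p (5 * x k ^ 3 - 4 * c) = 1 := by
      rw [padicNorm.sub_eq_right_of_lt (by rwa [h4c]), h4c]
    have := congrArg (padicNorm p) key
    rwa [padicNorm.mul, padicNorm.mul, padicNorm.mul, h4, hcube_add, h5, mul_one, mul_one,
      mul_one] at this

theorem one_lt_padicNorm_three_mul (h2 : padicNorm p 2 = 1) (hc : padicNorm p c = 1) {k : ℕ}
    (hk : 1 ≤ k) (hxk : padicNorm p (x k) < 1) : 1 < padicNorm p (x (3 * k)) := by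
  have h4 : padicNorm p 4 = 1 := by
    rw [show (4 : ℚ) = 2 * 2 by norm_num, padicNorm.mul, h2, one_mul]
  have hs0 : 0 < padicNorm p (x k) := padicNorm.pos (H.ne_zero hk)
  obtain ⟨h2k, hsum⟩ := H.padicNorm_two_mul_of_lt_one h2 hc hk hxk
  have hd : padicNorm p (x (2 * k) - x k) ≤ padicNorm p (x k) := padicNorm.sub_le h2k le_rfl
  have hd0 : 0 < padicNorm p (x (2 * k) - x k) :=
    padicNorm.pos (sub_ne_zero.2 (H.ne hk (by omega)))
  have hE1 := congrArg (padicNorm p) (H.add_mul_sub (k := 2 * k) (l := k) hk (by omega))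
  have hsq : padicNorm p ((x (2 * k) * x k) ^ 2) < padicNorm p (4 * c * (x (2 * k) + x k)) := by
    rw [padicNorm.mul, padicNorm.mul, h4, hc, hsum, padicNorm.pow, padicNorm.mul, one_mul,
      one_mul]
    calc (padicNorm p (x (2 * k)) * padicNorm p (x k)) ^ 2
        ≤ (padicNorm p (x k) * padicNorm p (x k)) ^ 2 := by
          gcongr
          exact mul_nonneg (padicNorm.nonneg _) (padicNorm.nonneg _)
      _ = padicNorm p (x k) * padicNorm p (x k) ^ 3 := by ring
      _ < padicNorm p (x k) * 1 := by gcongr; exact pow_lt_one₀ hs0.le hxk three_ne_zero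
      _ = padicNorm p (x k) := mul_one _
  rw [show 2 * k + k = 3 * k by ring, show 2 * k - k = k by omega,
    padicNorm.sub_eq_right_of_lt hsq, padicNorm.mul, padicNorm.mul, padicNorm.mul,
    padicNorm.mul, padicNorm.pow, h4, hc, hsum, one_mul, one_mul] at hE1
  have h3k : padicNorm p (x (3 * k)) * padicNorm p (x (2 * k) - x k) ^ 2 = 1 :=
    mul_left_cancel₀ hs0.ne' (by linear_combination hE1)
  have hd2 : padicNorm p (x (2 * k) - x k) ^ 2 < 1 := by nlinarith
  by_contra! h3k'
  nlinarith

theorem padicNorm_lt_one_of_three_mul (h3 : padicNorm p 3 = 1) (hc : padicNorm p c ≤ 1)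
    {g : ℕ} (hg : 1 ≤ g) (hxg : padicNorm p (x g) = 1) (hx2g : padicNorm p (x (2 * g)) ≤ 1)
    (hx3g : 1 < padicNorm p (x (3 * g))) :
    padicNorm p (x (2 * g) - x g) < 1 ∧ padicNorm p (x g ^ 3 + 4 * c) < 1 := by
  have hcube : padicNorm p (x g ^ 3) ≤ 1 := by rw [padicNorm.pow, hxg, one_pow]
  have hd : padicNorm p (x (2 * g) - x g) < 1 := by
    have hE1 := congrArg (padicNorm p) (H.add_mul_sub (k := 2 * g) (l := g) hg (by omega))
    rw [show 2 * g + g = 3 * g by ring, show 2 * g - g = g by omega, padicNorm.mul,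
      padicNorm.mul, padicNorm.pow, hxg, mul_one] at hE1
    have hsq : padicNorm p ((x (2 * g) * x g) ^ 2) ≤ 1 := by
      rw [padicNorm.pow, padicNorm.mul, hxg, mul_one]
      exact pow_le_one₀ (padicNorm.nonneg _) hx2g
    have hR : padicNorm p ((x (2 * g) * x g) ^ 2 - 4 * c * (x (2 * g) + x g)) ≤ 1 :=
      padicNorm.sub_le hsq (padicNorm.mul_le_one
        (padicNorm.mul_le_one (padicNorm.ofNat_le_one 4) hc) (padicNorm.add_le hx2g hxg.le))
    by_contra! h
    have : 1 ≤ padicNorm p (x (2 * g) - x g) ^ 2 := one_le_pow₀ h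
    nlinarith
  refine ⟨hd, ?_⟩
  have key : (x (2 * g) - x g) * (4 * (x g ^ 3 + c)) = -3 * x g * (x g ^ 3 + 4 * c) := by
    linear_combination H.double hg
  have hR : padicNorm p (-3 * x g * (x g ^ 3 + 4 * c)) = padicNorm p (x g ^ 3 + 4 * c) := by
    simp only [padicNorm.mul, padicNorm.neg, h3, hxg, one_mul]
  rw [← hR, ← key]
  exact padicNorm.mul_lt_one_left hd
    (padicNorm.mul_le_one (padicNorm.ofNat_le_one 4) (padicNorm.add_le hcube hc))

theorem padicNorm_mul_sub_lt_one (h2 : padicNorm p 2 = 1) (h3 : padicNorm p 3 = 1)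
    (hc : padicNorm p c = 1) {g : ℕ} (hg : 1 ≤ g) (hxg : padicNorm p (x g) = 1)
    (hker : ∀ r, 1 ≤ r → (1 < padicNorm p (x r) ↔ 3 * g ∣ r)) {j : ℕ} (hj : 1 ≤ j)
    (hj3 : ¬ 3 ∣ j) : padicNorm p (x (j * g) - x g) < 1 := by
  have hker' : ∀ i, 1 ≤ i → (1 < padicNorm p (x (i * g)) ↔ 3 ∣ i) := fun i hi => by
    rw [hker _ (Nat.mul_pos hi hg), Nat.mul_dvd_mul_iff_right hg]
  obtain ⟨hd, ha3⟩ := H.padicNorm_lt_one_of_three_mul h3 hc.le hg hxg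
    (not_lt.1 fun h => by have := (hker' 2 (by omega)).1 h; omega) ((hker' 3 (by omega)).2 dvd_rfl)
  induction j using Nat.strong_induction_on with
  | _ j ih =>
    obtain rfl | rfl | ⟨i, hi1, rfl⟩ : j = 1 ∨ j = 2 ∨ ∃ i, 1 ≤ i ∧ j = i + 2 := by
      rcases j with _ | _ | _ | i <;> simp_all
    · simp [padicNorm.zero]
    · exact hd
    · have hlt : g < (i + 1) * g := by nlinarith
      have hE1 := H.add_mul_sub hg hlt
      have hE2 := H.add_add_sub hg hlt
      rw [show (i + 1) * g + g = (i + 2) * g by ring,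
        show (i + 1) * g - g = i * g by rw [add_mul, one_mul, Nat.add_sub_cancel]] at hE1 hE2
      by_cases hi : 3 ∣ i + 1
      · exact padicNorm_sub_lt_one_of_one_lt_padicNorm h2 h3 hc.le hxg
          ((hker' _ (by omega)).2 hi) (ih i (by omega) hi1 (by omega)) hE2
      · exact padicNorm_sub_lt_one_of_padicNorm_sub_lt_one h2 h3 hc hxg ha3
          (ih (i + 1) (by omega) (by omega) hi)
          (not_lt.1 fun h => hj3 ((hker' _ (by omega)).1 h)) ((hker' i hi1).2 (by omega))
          hE1 hE2

theorem padicNorm_le_one_of_lt_three_mul (h2 : padicNorm p 2 = 1) (h3 : padicNorm p 3 = 1)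
    (hc : padicNorm p c = 1) {n : ℕ} (hn : 1 ≤ n) (hxn : padicNorm p (x n) < 1)
    (hprim : ∀ k, 1 ≤ k → k < n → 1 ≤ padicNorm p (x k)) {r : ℕ} (hr : 1 ≤ r)
    (hr3 : r < 3 * n) : padicNorm p (x r) ≤ 1 := by
  classical
  by_contra! hxr
  have hex : ∃ N, 1 ≤ N ∧ 1 < padicNorm p (x N) := ⟨r, hr, hxr⟩
  obtain ⟨hN, hxN⟩ := Nat.find_spec hex
  have hker : ∀ r, 1 ≤ r → (1 < padicNorm p (x r) ↔ Nat.find hex ∣ r) := fun r hr =>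
    H.one_lt_padicNorm_iff_dvd hc.le hN hxN
      (fun k hk hkN => not_lt.1 fun h => Nat.find_min hex hkN ⟨hk, h⟩) hr
  obtain ⟨g, hg3, hgn⟩ := Nat.exists_eq_three_mul_of_dvd_three_mul
    ((hker _ (by omega)).1 (H.one_lt_padicNorm_three_mul h2 hc hn hxn))
    (fun h => hxn.not_gt ((hker n hn).2 h))
  have hNr : Nat.find hex ≤ r := Nat.find_min' hex ⟨hr, hxr⟩
  rw [hg3] at hker
  have hg : 1 ≤ g := by omega
  have hxg : padicNorm p (x g) = 1 :=
    le_antisymm (not_lt.1 fun h => by have := Nat.le_of_dvd hg ((hker g hg).1 h); omega)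
      (hprim g hg (by omega))
  obtain ⟨j, rfl⟩ := hgn
  have hj3 : ¬ 3 ∣ j := fun h =>
    hxn.not_gt ((hker _ hn).2 (by rw [mul_comm g]; exact Nat.mul_dvd_mul_right h g))
  have hj : 1 ≤ j := Nat.pos_of_ne_zero (by rintro rfl; omega)
  have hcong := H.padicNorm_mul_sub_lt_one h2 h3 hc hg hxg hker hj hj3
  rw [mul_comm j] at hcong
  have hsum := padicNorm.add_eq_right_of_lt (q := x (g * j) - x g) (r := x g) (by rwa [hxg])
  rw [sub_add_cancel, hxg] at hsum
  exact hxn.ne hsum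

end IsXCoordSeq

end

section ShortWeierstrass

variable {F : Type*} [Field F] {c x₁ x₂ y₁ y₂ : F}

theorem chord_sub_mul_chord_add (h₁ : y₁ ^ 2 = x₁ ^ 3 + c) (h₂ : y₂ ^ 2 = x₂ ^ 3 + c)
    (hx : x₁ ≠ x₂) :
    (((y₁ - y₂) / (x₁ - x₂)) ^ 2 - x₁ - x₂) * (((y₁ + y₂) / (x₁ - x₂)) ^ 2 - x₁ - x₂)
        * (x₁ - x₂) ^ 2 = (x₁ * x₂) ^ 2 - 4 * c * (x₁ + x₂) := by
  have hx' : x₁ - x₂ ≠ 0 := sub_ne_zero.mpr hx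
  field_simp
  linear_combination (x₁ ^ 3 - x₂ ^ 3 + y₁ ^ 2 - y₂ ^ 2 - 2 * (x₁ + x₂) * (x₁ - x₂) ^ 2) * h₁
    + (-(x₁ ^ 3 - x₂ ^ 3 + y₁ ^ 2 - y₂ ^ 2) - 2 * (x₁ + x₂) * (x₁ - x₂) ^ 2) * h₂

theorem chord_sub_add_chord_add (h₁ : y₁ ^ 2 = x₁ ^ 3 + c) (h₂ : y₂ ^ 2 = x₂ ^ 3 + c)
    (hx : x₁ ≠ x₂) :
    ((((y₁ - y₂) / (x₁ - x₂)) ^ 2 - x₁ - x₂) + (((y₁ + y₂) / (x₁ - x₂)) ^ 2 - x₁ - x₂))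
        * (x₁ - x₂) ^ 2 = 2 * ((x₁ + x₂) * (x₁ * x₂) + 2 * c) := by
  have hx' : x₁ - x₂ ≠ 0 := sub_ne_zero.mpr hx
  field_simp
  linear_combination 2 * h₁ + 2 * h₂

theorem tangent_mul (h2 : (2 : F) ≠ 0) (h₁ : y₁ ^ 2 = x₁ ^ 3 + c) (hy : y₁ ≠ 0) :
    ((3 * x₁ ^ 2 / (2 * y₁)) ^ 2 - 2 * x₁) * (4 * (x₁ ^ 3 + c)) = x₁ * (x₁ ^ 3 - 8 * c) := by
  rw [← h₁]
  field_simp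
  linear_combination (-32 * x₁) * h₁

end ShortWeierstrass

namespace Mordell

open WeierstrassCurve.Affine

variable {m : ℤ}

theorem equation_of_nonsingular {x y : ℚ} (h : (Mordell m).Nonsingular x y) :
    y ^ 2 = x ^ 3 + -432 * m ^ 2 := by
  have := (equation_iff x y).1 h.1
  simp only [Mordell, zero_mul, add_zero] at this
  exact this

theorem negY_eq (x y : ℚ) : (Mordell m).negY x y = -y := by
  simp [Mordell]

@[simp]
theorem xCoord_some {x y : ℚ} (h : (Mordell m).Nonsingular x y) :
    xCoord (Point.some _ _ h) = x :=
  rfl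

theorem xCoord_add_of_X_ne {x₁ x₂ y₁ y₂ : ℚ} {h₁ : (Mordell m).Nonsingular x₁ y₁}
    {h₂ : (Mordell m).Nonsingular x₂ y₂} (hx : x₁ ≠ x₂) :
    xCoord (Point.some _ _ h₁ + Point.some _ _ h₂) = ((y₁ - y₂) / (x₁ - x₂)) ^ 2 - x₁ - x₂ := by
  rw [Point.add_of_X_ne hx]
  simp [xCoord, slope_of_X_ne hx, Mordell]

theorem xCoord_sub_of_X_ne {x₁ x₂ y₁ y₂ : ℚ} {h₁ : (Mordell m).Nonsingular x₁ y₁}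
    {h₂ : (Mordell m).Nonsingular x₂ y₂} (hx : x₁ ≠ x₂) :
    xCoord (Point.some _ _ h₁ - Point.some _ _ h₂) = ((y₁ + y₂) / (x₁ - x₂)) ^ 2 - x₁ - x₂ := by
  rw [sub_eq_add_neg, Point.neg_some, xCoord_add_of_X_ne hx, negY_eq, sub_neg_eq_add]

theorem xCoord_add_self {x₁ y₁ : ℚ} {h₁ : (Mordell m).Nonsingular x₁ y₁} (hy : y₁ ≠ 0) :
    xCoord (Point.some _ _ h₁ + Point.some _ _ h₁) = (3 * x₁ ^ 2 / (2 * y₁)) ^ 2 - 2 * x₁ := by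
  have hy' : y₁ ≠ (Mordell m).negY x₁ y₁ := by
    rw [negY_eq]; intro h; exact hy (by linarith)
  rw [Point.add_self_of_Y_ne hy']
  show (Mordell m).addX x₁ x₁ ((Mordell m).slope x₁ x₁ y₁ y₁) = _
  rw [slope_of_Y_ne rfl hy', negY_eq]
  simp only [addX, Mordell]
  ring

theorem exists_eq_some {P : (Mordell m).Point} (hP : P ≠ 0) :
    ∃ x y, ∃ h : (Mordell m).Nonsingular x y, P = Point.some _ _ h := by
  cases P with
  | zero => exact absurd rfl hP
  | some x y h => exact ⟨x, y, h, rfl⟩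

theorem Y_ne_zero {x y : ℚ} {h : (Mordell m).Nonsingular x y}
    (h2 : Point.some _ _ h + Point.some _ _ h ≠ 0) : y ≠ 0 := by
  rintro rfl
  exact h2 (Point.add_self_of_Y_eq (by rw [negY_eq, neg_zero]))

theorem isXCoordSeq {Q : (Mordell m).Point} (hQ : ∀ k : ℕ, 0 < k → k • Q ≠ 0) :
    IsXCoordSeq (-432 * m ^ 2) (fun k => xCoord (k • Q)) := by
  have hsome : ∀ k, 1 ≤ k → ∃ x y, ∃ h : (Mordell m).Nonsingular x y, k • Q = Point.some _ _ h :=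
    fun k hk => exists_eq_some (hQ k hk)
  have hY : ∀ {k x y} {h : (Mordell m).Nonsingular x y}, 1 ≤ k → k • Q = Point.some _ _ h →
      y ≠ 0 := fun hk hkQ => Y_ne_zero (by rw [← hkQ, ← add_nsmul]; exact hQ _ (by omega))
  have hX : ∀ ⦃k l⦄, 1 ≤ l → l < k → xCoord (k • Q) ≠ xCoord (l • Q) := by
    intro k l hl hlk heq
    obtain ⟨x₁, y₁, h₁, hk⟩ := hsome k (by omega)
    obtain ⟨x₂, y₂, h₂, hl⟩ := hsome l hl
    rw [hk, hl, xCoord_some, xCoord_some] at heq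
    rcases (Point.X_eq_iff (h₁ := h₁) (h₂ := h₂)).1 heq with heq | heq <;> rw [← hk, ← hl] at heq
    · exact hQ (k - l) (by omega) (by rw [sub_nsmul Q hlk.le, heq, add_neg_cancel])
    · exact hQ (k + l) (by omega) (by rw [add_nsmul, heq, neg_add_cancel])
  refine ⟨fun k hk => ?_, hX, fun k l hl hlk => ?_, fun k l hl hlk => ?_, fun k hk => ?_⟩
  · obtain ⟨x, y, h, hkQ⟩ := hsome k hk
    rw [hkQ, xCoord_some]
    rintro rfl
    have hy2 : y ^ 2 = 0 := by nlinarith [equation_of_nonsingular h, sq_nonneg y, sq_nonneg (m : ℚ)]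
    exact hY hk hkQ (pow_eq_zero_iff two_ne_zero |>.1 hy2)
  · obtain ⟨x₁, y₁, h₁, hk⟩ := hsome k (by omega)
    obtain ⟨x₂, y₂, h₂, hl'⟩ := hsome l hl
    have hx : x₁ ≠ x₂ := by simpa [hk, hl'] using hX hl hlk
    rw [add_nsmul, sub_nsmul Q hlk.le, hk, hl', ← sub_eq_add_neg, xCoord_add_of_X_ne hx,
      xCoord_sub_of_X_ne hx, xCoord_some, xCoord_some]
    exact chord_sub_mul_chord_add (equation_of_nonsingular h₁) (equation_of_nonsingular h₂) hx
  · obtain ⟨x₁, y₁, h₁, hk⟩ := hsome k (by omega)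
    obtain ⟨x₂, y₂, h₂, hl'⟩ := hsome l hl
    have hx : x₁ ≠ x₂ := by simpa [hk, hl'] using hX hl hlk
    rw [add_nsmul, sub_nsmul Q hlk.le, hk, hl', ← sub_eq_add_neg, xCoord_add_of_X_ne hx,
      xCoord_sub_of_X_ne hx, xCoord_some, xCoord_some]
    exact chord_sub_add_chord_add (equation_of_nonsingular h₁) (equation_of_nonsingular h₂) hx
  · obtain ⟨x, y, h, hkQ⟩ := hsome k hk
    rw [two_mul, add_nsmul, hkQ, xCoord_add_self (hY hk hkQ), xCoord_some]
    exact tangent_mul two_ne_zero (equation_of_nonsingular h) (hY hk hkQ)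

end Mordell

theorem primitive_divisor_of_A_rank_of_apparition_in_B_general
    (m : ℤ)
    (Q : (Mordell m).Point) (hQ : ∀ k : ℕ, 0 < k → k • Q ≠ 0)
    (A B C : ℕ → ℤ)
    (hB : ∀ n : ℕ, 1 ≤ n → 1 ≤ B n)
    (hAB : ∀ n : ℕ, 1 ≤ n → Int.gcd (A n) (B n) = 1)
    (hABC : ∀ n : ℕ, 1 ≤ n →
      ∃ h : (Mordell m).Nonsingular ((A n : ℚ) / (B n : ℚ) ^ 2) ((C n : ℚ) / (B n : ℚ) ^ 3),
        n • Q = WeierstrassCurve.Affine.Point.some _ _ h)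
    (n : ℕ) (hn : 2 ≤ n) (p : ℕ) (hp : p.Prime) (hp5 : 5 ≤ p)
    (hdvd : (p : ℤ) ∣ A n) (hprim : ∀ k : ℕ, 1 ≤ k → k < n → ¬ (p : ℤ) ∣ A k) :
    ¬ (p : ℤ) ∣ m ∧ (p : ℤ) ∣ B (3 * n) ∧
      ∀ r : ℕ, 1 ≤ r → r < 3 * n → ¬ (p : ℤ) ∣ B r := by
  have := Fact.mk hp
  have H := Mordell.isXCoordSeq hQ
  set x : ℕ → ℚ := fun k => xCoord (k • Q)
  have hxAB : ∀ k, 1 ≤ k → x k = A k / B k ^ 2 := fun k hk => by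
    obtain ⟨h, hkQ⟩ := hABC k hk
    simp only [x, hkQ, Mordell.xCoord_some]
  have hA : ∀ k, 1 ≤ k → (padicNorm p (x k) < 1 ↔ (p : ℤ) ∣ A k) := fun k hk => by
    rw [hxAB k hk]; exact padicNorm_div_sq_lt_one_iff (hAB k hk) (by linarith [hB k hk])
  have hB' : ∀ k, 1 ≤ k → (1 < padicNorm p (x k) ↔ (p : ℤ) ∣ B k) := fun k hk => by
    rw [hxAB k hk]; exact one_lt_padicNorm_div_sq_iff (hAB k hk) (by linarith [hB k hk])
  have hsmall : ∀ q : ℕ, 0 < q → q < 5 → padicNorm p q = 1 := fun q hq hq5 =>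
    (padicNorm.nat_eq_one_iff q).2 fun h => by have := Nat.le_of_dvd hq h; omega
  have h2 : padicNorm p 2 = 1 := by exact_mod_cast hsmall 2 (by norm_num) (by norm_num)
  have h3 : padicNorm p 3 = 1 := by exact_mod_cast hsmall 3 (by norm_num) (by norm_num)
  have hc_int : ((-432 * m ^ 2 : ℤ) : ℚ) = -432 * (m : ℚ) ^ 2 := by push_cast; ring
  have hxn := (hA n (by omega)).2 hdvd
  have hprim' : ∀ k, 1 ≤ k → k < n → 1 ≤ padicNorm p (x k) := fun k hk hkn =>
    not_lt.1 fun h => hprim k hk hkn ((hA k hk).1 h)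
  have hc : padicNorm p (-432 * m ^ 2 : ℚ) = 1 :=
    H.padicNorm_eq_one_of_primitive (hc_int ▸ padicNorm.of_int _) hn hxn hprim'
  refine ⟨fun hpm => ?_, (hB' _ (by omega)).1 (H.one_lt_padicNorm_three_mul h2 hc (by omega) hxn),
    fun r hr1 hr hpB => ?_⟩
  · rw [← hc_int, padicNorm.int_eq_one_iff] at hc
    exact hc (Dvd.dvd.mul_left (dvd_pow hpm two_ne_zero) _)
  · exact (H.padicNorm_le_one_of_lt_three_mul h2 h3 hc (by omega) hxn hprim' hr1 hr).not_gt
      ((hB' r hr1).2 hpB)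

theorem primitive_divisor_of_A_rank_of_apparition_in_B
    (m : ℤ) (hm : m ≠ 0) (hcf : CubeFree m)
    (Q : (Mordell m).Point) (hQ : ∀ k : ℕ, 0 < k → k • Q ≠ 0)
    (A B C : ℕ → ℤ)
    (hB : ∀ n : ℕ, 1 ≤ n → 1 ≤ B n)
    (hAB : ∀ n : ℕ, 1 ≤ n → Int.gcd (A n) (B n) = 1)
    (hCB : ∀ n : ℕ, 1 ≤ n → Int.gcd (C n) (B n) = 1)
    (hABC : ∀ n : ℕ, 1 ≤ n →
      ∃ h : (Mordell m).Nonsingular ((A n : ℚ) / (B n : ℚ) ^ 2) ((C n : ℚ) / (B n : ℚ) ^ 3),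
        n • Q = WeierstrassCurve.Affine.Point.some _ _ h)
    (n : ℕ) (hn : 2 ≤ n) (p : ℕ) (hp : p.Prime) (hp5 : 5 ≤ p)
    (hdvd : (p : ℤ) ∣ A n) (hprim : ∀ k : ℕ, 1 ≤ k → k < n → ¬ (p : ℤ) ∣ A k) :
    ¬ (p : ℤ) ∣ m ∧ (p : ℤ) ∣ B (3 * n) ∧
      ∀ r : ℕ, 1 ≤ r → r < 3 * n → ¬ (p : ℤ) ∣ B r :=
  primitive_divisor_of_A_rank_of_apparition_in_B_general m Q hQ A B C hB hAB hABC n hn p hp hp5 hdvd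
    hprim
end
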